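/- arXiv:2401.08084 — 6 statements merged into one kernel-verified Lean document; each statement's English description precedes it below -/
import Mathlib

section
/- Let 0≤C<1 and let h, J be continuous on [0,∞) with h(ρ)→1 as ρ→∞ and J(ρ)²/ρ²→C² as ρ→∞. Let F be a twice differentiable function on (ρ₀,∞) with 0<F(ρ)≤1, F(ρ)→0 as ρ→∞, solving ρ²F''(ρ)=(F(ρ)²−1)F(ρ)−(J(ρ)²−ρ²h(ρ)²)F(ρ). Then for every ε with 0<ε<√(1−C²) there is a constant C_ε>0 such that 0<F(ρ)≤C_ε e^{−(√(1−C²)−ε)ρ} for all sufficiently large ρ. -/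
/-!
Far out the equation reads `F'' = (h² - J²/ρ² - 1/ρ² + F²/ρ²) F`, and the coefficient tends to
`1 - C² > μ²` with `μ = √(1 - C²) - ε`; since `F > 0` this gives `F'' ≥ μ² F` beyond some `R`.
The difference `w = F - F(R) e^{-μ(ρ - R)}` then satisfies `w'' ≥ μ² w`, vanishes at `R` and tends
to `0`, so by the maximum principle it cannot become positive: a positive maximum would be a
local maximum with `w'' > 0`.
-/

open Real Set Filter Topology

/-- If `f'' x > 0`, the second derivative test makes `x` a local minimum as well, so `f` is
constant near `x` and `f'' x = 0`. -/
theorem IsLocalMax.deriv_deriv_nonpos {f : ℝ → ℝ} {x : ℝ} (hmax : IsLocalMax f x)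
    (hc : ContinuousAt f x) : deriv (deriv f) x ≤ 0 := by
  by_contra! hpos
  have hmin : IsLocalMin f x := isLocalMin_of_deriv_deriv_pos hpos hmax.deriv_eq_zero hc
  have hconst : f =ᶠ[𝓝 x] fun _ => f x := by
    filter_upwards [hmax, hmin] with y hy₁ hy₂ using le_antisymm hy₁ hy₂
  have hflat : deriv f =ᶠ[𝓝 x] fun _ => 0 := by
    simpa using hconst.deriv
  simp [hflat.deriv_eq] at hpos

theorem nonpos_of_tendsto_zero_of_deriv_deriv_pos {w : ℝ → ℝ} {R : ℝ}
    (hcont : ContinuousOn w (Ici R)) (hR : w R ≤ 0) (hlim : Tendsto w atTop (𝓝 0))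
    (hconvex : ∀ x ∈ Ioi R, 0 < w x → 0 < deriv (deriv w) x) :
    ∀ x ∈ Ici R, w x ≤ 0 := by
  by_contra! ⟨x₀, hx₀, hwx₀⟩
  have hfar : ∀ᶠ x in cocompact ℝ ⊓ 𝓟 (Ici R), w x ≤ w x₀ := by
    rw [eventually_inf_principal, cocompact_eq_atBot_atTop, eventually_sup]
    exact ⟨(eventually_lt_atBot R).mono fun x hx hxR => absurd hxR (not_le.2 hx),
      (hlim.eventually (gt_mem_nhds hwx₀)).mono fun x hx _ => hx.le⟩
  obtain ⟨z, hz, hzmax⟩ := hcont.exists_isMaxOn' isClosed_Ici hx₀ hfar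
  have hwz : 0 < w z := hwx₀.trans_le (hzmax hx₀)
  have hRz : R < z := lt_of_le_of_ne hz fun h => (h ▸ hR).not_gt hwz
  have hnhds : Ici R ∈ 𝓝 z := Ici_mem_nhds hRz
  exact ((hzmax.isLocalMax hnhds).deriv_deriv_nonpos (hcont.continuousAt hnhds)).not_gt
    (hconvex z hRz hwz)

theorem le_mul_exp_of_mul_le_deriv_deriv {F : ℝ → ℝ} {μ R : ℝ} (hμ : 0 < μ)
    (hcont : ContinuousOn F (Ici R))
    (hdiff : ∀ x ∈ Ioi R, DifferentiableAt ℝ F x ∧ DifferentiableAt ℝ (deriv F) x)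
    (hF : ∀ x ∈ Ioi R, μ ^ 2 * F x ≤ deriv (deriv F) x) (hlim : Tendsto F atTop (𝓝 0)) :
    ∀ x ∈ Ici R, F x ≤ F R * exp (-μ * (x - R)) := by
  set g : ℝ → ℝ := fun x => F R * exp (-μ * (x - R)) with hg_def
  have hg : ∀ x, HasDerivAt g (-μ * g x) x := fun x =>
    ((((hasDerivAt_id x).sub_const R).const_mul (-μ)).exp.const_mul (F R)).congr_deriv
      (by simp only [hg_def, id]; ring)
  have hg_lim : Tendsto g atTop (𝓝 0) := by
    have : Tendsto (fun x => -μ * (x - R)) atTop atBot :=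
      (tendsto_atTop_add_const_right _ (-R) tendsto_id).const_mul_atTop_of_neg (neg_neg_of_pos hμ)
    simpa [hg_def, neg_mul] using (tendsto_exp_atBot.comp this).const_mul (F R)
  have hw'' : ∀ x ∈ Ioi R,
      deriv (deriv (fun y => F y - g y)) x = deriv (deriv F) x - μ ^ 2 * g x := by
    intro x hx
    have hw' : deriv (fun y => F y - g y) =ᶠ[𝓝 x] fun y => deriv F y - -μ * g y := by
      filter_upwards [Ioi_mem_nhds hx] with y hy
      exact ((hdiff y hy).1.hasDerivAt.sub (hg y)).deriv
    rw [hw'.deriv_eq]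
    exact ((hdiff x hx).2.hasDerivAt.sub ((hg x).const_mul (-μ))).deriv.trans (by ring)
  have hw := nonpos_of_tendsto_zero_of_deriv_deriv_pos (w := fun y => F y - g y)
    (hcont.sub (continuous_iff_continuousAt.2 fun x => (hg x).continuousAt).continuousOn)
    (by simp [hg_def]) (by simpa using hlim.sub hg_lim) fun x hx hwx => by
      rw [hw'' x hx]
      nlinarith [hF x hx, mul_pos (pow_pos hμ 2) hwx]
  exact fun x hx => sub_nonpos.1 (hw x hx)

theorem eventually_mul_le_deriv_deriv {C ρ₀ μ : ℝ} {h J F : ℝ → ℝ}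
    (hhlim : Tendsto h atTop (𝓝 1))
    (hJlim : Tendsto (fun ρ => J ρ ^ 2 / ρ ^ 2) atTop (𝓝 (C ^ 2)))
    (hFpos : ∀ ρ ∈ Ioi ρ₀, 0 < F ρ)
    (hFode : ∀ ρ ∈ Ioi ρ₀, ρ ^ 2 * deriv (deriv F) ρ
      = (F ρ ^ 2 - 1) * F ρ - (J ρ ^ 2 - ρ ^ 2 * h ρ ^ 2) * F ρ)
    (hμ : μ ^ 2 < 1 - C ^ 2) :
    ∀ᶠ ρ in atTop, μ ^ 2 * F ρ ≤ deriv (deriv F) ρ := by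
  have hcoeff : Tendsto (fun ρ => h ρ ^ 2 - J ρ ^ 2 / ρ ^ 2 - (ρ ^ 2)⁻¹) atTop (𝓝 (1 - C ^ 2)) := by
    simpa using ((hhlim.pow 2).sub hJlim).sub (tendsto_pow_atTop two_ne_zero).inv_tendsto_atTop
  filter_upwards [hcoeff.eventually (lt_mem_nhds hμ), eventually_gt_atTop ρ₀,
    eventually_gt_atTop 0] with ρ hρμ hρ₀ hρ
  have hF := hFpos ρ hρ₀
  have hρ2 : 0 < ρ ^ 2 := by positivity
  have hbound : μ ^ 2 * ρ ^ 2 < ρ ^ 2 * h ρ ^ 2 - J ρ ^ 2 - 1 := by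
    have := mul_lt_mul_of_pos_right hρμ hρ2
    rw [sub_mul, sub_mul, div_mul_cancel₀ _ hρ2.ne', inv_mul_cancel₀ hρ2.ne'] at this
    linarith
  refine le_of_mul_le_mul_left ?_ hρ2
  nlinarith [hFode ρ hρ₀, mul_lt_mul_of_pos_right hbound hF, pow_pos hF 3]

theorem F_exponential_decay_general
    (C ρ₀ : ℝ) (h J F : ℝ → ℝ)
    (hhlim : Tendsto h atTop (𝓝 1))
    (hJlim : Tendsto (fun ρ => J ρ ^ 2 / ρ ^ 2) atTop (𝓝 (C ^ 2)))
    (hFdiff : ∀ ρ ∈ Ioi ρ₀, DifferentiableAt ℝ F ρ ∧ DifferentiableAt ℝ (deriv F) ρ)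
    (hFrange : ∀ ρ ∈ Ioi ρ₀, 0 < F ρ ∧ F ρ ≤ 1)
    (hFlim : Tendsto F atTop (𝓝 0))
    (hFode : ∀ ρ ∈ Ioi ρ₀, ρ ^ 2 * deriv (deriv F) ρ
      = (F ρ ^ 2 - 1) * F ρ - (J ρ ^ 2 - ρ ^ 2 * h ρ ^ 2) * F ρ) :
    ∀ ε : ℝ, 0 < ε → ε < Real.sqrt (1 - C ^ 2) →
      ∃ Cε : ℝ, 0 < Cε ∧ ∃ R : ℝ, ∀ ρ ≥ R,
        0 < F ρ ∧ F ρ ≤ Cε * exp (-(Real.sqrt (1 - C ^ 2) - ε) * ρ) := by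
  intro ε hε hεs
  set μ := √(1 - C ^ 2) - ε
  have hμ : 0 < μ := sub_pos.2 hεs
  have hμ2 : μ ^ 2 < 1 - C ^ 2 := by
    rw [← sq_sqrt (sqrt_pos.1 (hε.trans hεs)).le]
    exact pow_lt_pow_left₀ (sub_lt_self _ hε) hμ.le two_ne_zero
  obtain ⟨R, hR⟩ := eventually_atTop.1 <| (eventually_gt_atTop ρ₀).and <|
    eventually_mul_le_deriv_deriv hhlim hJlim (fun ρ hρ => (hFrange ρ hρ).1) hFode hμ2
  have hdiff : ∀ ρ ∈ Ioi R, DifferentiableAt ℝ F ρ ∧ DifferentiableAt ℝ (deriv F) ρ :=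
    fun ρ hρ => hFdiff ρ (hR ρ hρ.le).1
  have hcomp := le_mul_exp_of_mul_le_deriv_deriv hμ
    (fun ρ hρ => (hFdiff ρ (hR ρ hρ).1).1.continuousAt.continuousWithinAt) hdiff
    (fun ρ hρ => (hR ρ hρ.le).2) hFlim
  refine ⟨F R * exp (μ * R), mul_pos (hFrange R (hR R le_rfl).1).1 (exp_pos _), R,
    fun ρ hρ => ⟨(hFrange ρ (hR ρ hρ).1).1, ?_⟩⟩
  calc F ρ ≤ F R * exp (-μ * (ρ - R)) := hcomp ρ hρ
    _ = F R * exp (μ * R) * exp (-μ * ρ) := by rw [mul_assoc, ← exp_add]; ring_nf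

/-- Exponential decay of the `F`-component at infinity:
`F(ρ) = O(e^{-(√(1-C²)-ε)ρ})` as `ρ → ∞`. -/
theorem F_exponential_decay
    (C ρ₀ : ℝ) (hC0 : 0 ≤ C) (hC1 : C < 1) (h J F : ℝ → ℝ)
    (hhcont : ContinuousOn h (Ici 0)) (hJcont : ContinuousOn J (Ici 0))
    (hhlim : Tendsto h atTop (𝓝 1))
    (hJlim : Tendsto (fun ρ => J ρ ^ 2 / ρ ^ 2) atTop (𝓝 (C ^ 2)))
    (hFdiff : ∀ ρ ∈ Ioi ρ₀, DifferentiableAt ℝ F ρ ∧ DifferentiableAt ℝ (deriv F) ρ)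
    (hFrange : ∀ ρ ∈ Ioi ρ₀, 0 < F ρ ∧ F ρ ≤ 1)
    (hFlim : Tendsto F atTop (𝓝 0))
    (hFode : ∀ ρ ∈ Ioi ρ₀, ρ ^ 2 * deriv (deriv F) ρ
      = (F ρ ^ 2 - 1) * F ρ - (J ρ ^ 2 - ρ ^ 2 * h ρ ^ 2) * F ρ) :
    ∀ ε : ℝ, 0 < ε → ε < Real.sqrt (1 - C ^ 2) →
      ∃ Cε : ℝ, 0 < Cε ∧ ∃ R : ℝ, ∀ ρ ≥ R,
        0 < F ρ ∧ F ρ ≤ Cε * exp (-(Real.sqrt (1 - C ^ 2) - ε) * ρ) :=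
  F_exponential_decay_general C ρ₀ h J F hhlim hJlim hFdiff hFrange hFlim hFode
end

section
/- Under the standing hypotheses on (J,h), the boundary value problem for the F-equation has at most one solution: if F₁ and F₂ are both continuously differentiable on [0,∞), twice differentiable on (0,∞), solve ρ²F''=(F²−1)F−(J²−ρ²h²)F on (0,∞), satisfy F₁(0)=F₂(0)=1, F₁(∞)=F₂(∞)=0, and F₁(ρ)≠0, F₂(ρ)≠0 for all ρ∈[0,∞), then F₁=F₂. -/
open Real Set Filter Topology

/-!
For two positive solutions the Wronskian `W = F₂ F₁' - F₂' F₁` satisfies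
`ρ² W' = F₁ F₂ (F₁² - F₂²)`, so it increases wherever `F₁ > F₂`, and `(F₁ / F₂)' = W / F₂²`.
If `F₁ > F₂` somewhere, the mean value theorem after the last contact point gives a `ρ₁` with
`W ρ₁ > 0`; from then on `W` stays positive, so `F₁ / F₂` keeps increasing and `F₁ > F₂` never ends.
Hence `W ≥ W ρ₁ > 0` on `[ρ₁, ∞)`, contradicting `W → 0`. The latter holds because the potential
`J² - ρ² h²` tends to `-∞`, which makes every positive solution convex near infinity, so `F → 0`
forces `F' → 0`.
-/

theorem IsPreconnected.pos_of_ne_zero {X : Type*} [TopologicalSpace X] {s : Set X}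
    (hs : IsPreconnected s) {f : X → ℝ} (hf : ContinuousOn f s) {x₀ : X} (hx₀ : x₀ ∈ s)
    (h₀ : 0 < f x₀) (hne : ∀ x ∈ s, f x ≠ 0) : ∀ x ∈ s, 0 < f x := by
  intro x hx
  by_contra! hle
  obtain ⟨c, hc, hfc⟩ := hs.intermediate_value hx hx₀ hf ⟨hle, h₀.le⟩
  exact hne c hc hfc

theorem exists_mem_Ico_le_forall_Ioc_lt {f g : ℝ → ℝ} {p q : ℝ} (hpq : p ≤ q)
    (hf : ContinuousOn f (Icc p q)) (hg : ContinuousOn g (Icc p q)) (hp : g p ≤ f p)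
    (hq : f q < g q) : ∃ a ∈ Ico p q, g a ≤ f a ∧ ∀ s ∈ Ioc a q, f s < g s := by
  have hS : IsCompact {s ∈ Icc p q | g s ≤ f s} :=
    isCompact_Icc.of_isClosed_subset (isClosed_Icc.isClosed_le hg hf) (sep_subset _ _)
  obtain ⟨a, ⟨⟨hpa, haq⟩, hga⟩, hmax⟩ := hS.exists_isGreatest ⟨p, ⟨le_rfl, hpq⟩, hp⟩
  refine ⟨a, ⟨hpa, haq.lt_of_ne ?_⟩, hga, fun s hs => ?_⟩
  · rintro rfl
    exact hga.not_gt hq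
  · by_contra! hgs
    exact hs.1.not_ge (hmax ⟨⟨hpa.trans hs.1.le, hs.2⟩, hgs⟩)

theorem exists_mem_Ioi_le_forall_Ico_lt {f g : ℝ → ℝ} {q : ℝ} (hf : ContinuousOn f (Ici q))
    (hg : ContinuousOn g (Ici q)) (hq : f q < g q) (hcross : ∃ s ∈ Ici q, g s ≤ f s) :
    ∃ b ∈ Ioi q, g b ≤ f b ∧ ∀ s ∈ Ico q b, f s < g s := by
  obtain ⟨⟨hqb, hgb⟩, hmin⟩ :=
    (isClosed_Ici.isClosed_le hg hf).isLeast_csInf hcross ⟨q, fun s hs => hs.1⟩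
  refine ⟨_, mem_Ioi.mpr (lt_of_le_of_ne hqb ?_), hgb, fun s hs => ?_⟩
  · intro h
    rw [← h] at hgb
    exact hgb.not_gt hq
  · by_contra! hgs
    exact hs.2.not_ge (hmin ⟨hs.1, hgs⟩)

theorem tendsto_deriv_zero_of_monotoneOn_deriv {F : ℝ → ℝ} {R l : ℝ}
    (hF : ∀ ρ ∈ Ici R, DifferentiableAt ℝ F ρ) (hmono : MonotoneOn (deriv F) (Ici R))
    (hlim : Tendsto F atTop (𝓝 l)) : Tendsto (deriv F) atTop (𝓝 0) := by
  have hslope : ∀ t ∈ Ici R, ∃ ξ ∈ Ioo t (t + 1), deriv F ξ = F (t + 1) - F t := by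
    intro t ht
    obtain ⟨ξ, hξ, h⟩ := exists_hasDerivAt_eq_slope F (deriv F) (lt_add_one t)
      (fun s hs => (hF s (le_trans ht hs.1)).continuousAt.continuousWithinAt)
      (fun s hs => (hF s (le_trans ht hs.1.le)).hasDerivAt)
    exact ⟨ξ, hξ, by simpa using h⟩
  -- monotonicity of `F'` squeezes it between consecutive unit difference quotients of `F`
  have hlower : ∀ᶠ t in atTop, F t - F (t - 1) ≤ deriv F t := by
    filter_upwards [eventually_ge_atTop (R + 1)] with t ht
    obtain ⟨ξ, hξ, h⟩ := hslope (t - 1) (by simp only [mem_Ici]; linarith)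
    rw [sub_add_cancel] at h hξ
    exact h ▸ hmono (by simp only [mem_Ici]; linarith [hξ.1]) (by simp only [mem_Ici]; linarith)
      hξ.2.le
  have hupper : ∀ᶠ t in atTop, deriv F t ≤ F (t + 1) - F t := by
    filter_upwards [eventually_ge_atTop R] with t ht
    obtain ⟨ξ, hξ, h⟩ := hslope t ht
    exact h ▸ hmono ht (by simp only [mem_Ici]; linarith [hξ.1]) hξ.1.le
  have hshift : ∀ c : ℝ, Tendsto (fun t => F (t + c)) atTop (𝓝 l) :=
    fun c => hlim.comp (tendsto_atTop_add_const_right _ c tendsto_id)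
  refine tendsto_of_tendsto_of_tendsto_of_le_of_le' ?_ ?_ hlower hupper
  · simpa [sub_eq_add_neg] using hlim.sub (hshift (-1))
  · simpa using (hshift 1).sub hlim

noncomputable def wronskian (f g : ℝ → ℝ) (x : ℝ) : ℝ :=
  f x * deriv g x - deriv f x * g x

theorem hasDerivAt_div_of_wronskian {f g : ℝ → ℝ} {x : ℝ} (hf : DifferentiableAt ℝ f x)
    (hg : DifferentiableAt ℝ g x) (hgx : g x ≠ 0) :
    HasDerivAt (fun y => f y / g y) (wronskian g f x / g x ^ 2) x :=
  (hf.hasDerivAt.div hg.hasDerivAt hgx).congr_deriv (by rw [wronskian]; ring)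

theorem hasDerivAt_wronskian {f g : ℝ → ℝ} {x : ℝ} (hf : DifferentiableAt ℝ f x)
    (hf' : DifferentiableAt ℝ (deriv f) x) (hg : DifferentiableAt ℝ g x)
    (hg' : DifferentiableAt ℝ (deriv g) x) :
    HasDerivAt (wronskian f g) (f x * deriv (deriv g) x - deriv (deriv f) x * g x) x :=
  ((hf.hasDerivAt.mul hg'.hasDerivAt).sub (hf'.hasDerivAt.mul hg.hasDerivAt)).congr_deriv
    (by ring)

-- mean value theorem for `F₁ / F₂`, whose derivative is `W / F₂²`, after the last contact point
theorem exists_wronskian_pos_of_lt {F₁ F₂ : ℝ → ℝ}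
    (hF₁ : ContinuousOn F₁ (Ici 0)) (hF₂ : ContinuousOn F₂ (Ici 0))
    (hF₁d : ∀ ρ ∈ Ioi (0:ℝ), DifferentiableAt ℝ F₁ ρ)
    (hF₂d : ∀ ρ ∈ Ioi (0:ℝ), DifferentiableAt ℝ F₂ ρ)
    (hF₂pos : ∀ ρ ∈ Ici (0:ℝ), 0 < F₂ ρ) (h₀ : F₁ 0 ≤ F₂ 0) {x : ℝ} (hx : 0 ≤ x)
    (hlt : F₂ x < F₁ x) : ∃ ρ ∈ Ioo 0 x, F₂ ρ < F₁ ρ ∧ 0 < wronskian F₂ F₁ ρ := by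
  obtain ⟨a, ⟨ha, hax⟩, hFa, hFax⟩ := exists_mem_Ico_le_forall_Ioc_lt hx
    (hF₂.mono Icc_subset_Ici_self) (hF₁.mono Icc_subset_Ici_self) h₀ hlt
  have hIcc : Icc a x ⊆ Ici 0 := fun s hs => le_trans ha hs.1
  obtain ⟨ρ, hρ, hslope⟩ := exists_hasDerivAt_eq_slope (fun s => F₁ s / F₂ s)
    (fun s => wronskian F₂ F₁ s / F₂ s ^ 2) hax
    ((hF₁.mono hIcc).div (hF₂.mono hIcc) fun s hs => (hF₂pos s (hIcc hs)).ne')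
    fun s hs => hasDerivAt_div_of_wronskian (hF₁d s (ha.trans_lt hs.1)) (hF₂d s (ha.trans_lt hs.1))
      (hF₂pos s (hIcc (Ioo_subset_Icc_self hs))).ne'
  have hF₂a := hF₂pos a (hIcc (left_mem_Icc.mpr hax.le))
  have hF₂x := hF₂pos x (hIcc (right_mem_Icc.mpr hax.le))
  refine ⟨ρ, ⟨ha.trans_lt hρ.1, hρ.2⟩, hFax ρ ⟨hρ.1, hρ.2.le⟩,
    (div_pos_iff_of_pos_right (pow_pos (hF₂pos ρ (hIcc (Ioo_subset_Icc_self hρ))) 2)).mp ?_⟩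
  rw [hslope]
  refine div_pos (sub_pos.mpr ?_) (sub_pos.mpr hax)
  exact ((div_le_one hF₂a).mpr hFa).trans_lt ((one_lt_div hF₂x).mpr hlt)

theorem le_of_deriv_wronskian_pos {F₁ F₂ : ℝ → ℝ}
    (hF₁ : ContinuousOn F₁ (Ici 0)) (hF₂ : ContinuousOn F₂ (Ici 0))
    (hF₁d : ∀ ρ ∈ Ioi (0:ℝ), DifferentiableAt ℝ F₁ ρ)
    (hF₂d : ∀ ρ ∈ Ioi (0:ℝ), DifferentiableAt ℝ F₂ ρ)
    (hF₂pos : ∀ ρ ∈ Ici (0:ℝ), 0 < F₂ ρ) (h₀ : F₁ 0 ≤ F₂ 0)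
    (hW : ∀ ρ ∈ Ioi (0:ℝ), DifferentiableAt ℝ (wronskian F₂ F₁) ρ)
    (hW' : ∀ ρ ∈ Ioi (0:ℝ), F₂ ρ < F₁ ρ → 0 < deriv (wronskian F₂ F₁) ρ)
    (hWlim : Tendsto (wronskian F₂ F₁) atTop (𝓝 0)) :
    ∀ ρ ∈ Ici (0:ℝ), F₁ ρ ≤ F₂ ρ := by
  intro x hx
  by_contra! hlt
  obtain ⟨ρ₁, ⟨hρ₁, -⟩, hlt₁, hWρ₁⟩ :=
    exists_wronskian_pos_of_lt hF₁ hF₂ hF₁d hF₂d hF₂pos h₀ hx hlt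
  have hIci : Ici ρ₁ ⊆ Ioi 0 := fun s hs => hρ₁.trans_le hs
  have hF₂pos' : ∀ s ∈ Ici ρ₁, 0 < F₂ s := fun s hs => hF₂pos s (Ioi_subset_Ici_self (hIci hs))
  have hWmono : ∀ b, (∀ s ∈ Ico ρ₁ b, F₂ s < F₁ s) → StrictMonoOn (wronskian F₂ F₁) (Icc ρ₁ b) :=
    fun b hb => strictMonoOn_of_deriv_pos (convex_Icc _ _)
      (fun s hs => (hW s (hIci hs.1)).continuousAt.continuousWithinAt)
      fun s hs => by
        rw [interior_Icc] at hs
        exact hW' s (hIci hs.1.le) (hb s (Ioo_subset_Ico_self hs))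
  by_cases hcross : ∃ s ∈ Ici ρ₁, F₁ s ≤ F₂ s
  · obtain ⟨b, hb, hFb, hFρ₁b⟩ := exists_mem_Ioi_le_forall_Ico_lt
      (hF₂.mono fun s hs => hρ₁.le.trans hs) (hF₁.mono fun s hs => hρ₁.le.trans hs) hlt₁ hcross
    -- `W > 0` on `[ρ₁, b]`, so `F₁ / F₂` increases there and cannot drop back to `1` at `b`
    have hmono : StrictMonoOn (fun s => F₁ s / F₂ s) (Icc ρ₁ b) :=
      strictMonoOn_of_deriv_pos (convex_Icc _ _)
        (fun s hs => ((hF₁d s (hIci hs.1)).continuousAt.div (hF₂d s (hIci hs.1)).continuousAt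
          (hF₂pos' s hs.1).ne').continuousWithinAt)
        fun s hs => by
          rw [interior_Icc] at hs
          have hs₀ : s ∈ Ici ρ₁ := hs.1.le
          rw [(hasDerivAt_div_of_wronskian (hF₁d s (hIci hs₀)) (hF₂d s (hIci hs₀))
            (hF₂pos' s hs₀).ne').deriv]
          refine div_pos (hWρ₁.trans ?_) (pow_pos (hF₂pos' s hs₀) 2)
          exact hWmono b hFρ₁b (left_mem_Icc.mpr hb.le) (Ioo_subset_Icc_self hs) hs.1
    have := hmono (left_mem_Icc.mpr hb.le) (right_mem_Icc.mpr hb.le) hb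
    linarith [(one_lt_div (hF₂pos' ρ₁ self_mem_Ici)).mpr hlt₁,
      (div_le_one (hF₂pos' b (mem_Ici.mpr hb.le))).mpr hFb]
  · push Not at hcross
    obtain ⟨s, hWs, hρ₁s⟩ :=
      ((hWlim.eventually (gt_mem_nhds hWρ₁)).and (eventually_gt_atTop ρ₁)).exists
    exact hWs.not_gt (hWmono s (fun t ht => hcross t ht.1) (left_mem_Icc.mpr hρ₁s.le)
      (right_mem_Icc.mpr hρ₁s.le) hρ₁s)

structure IsFEquationSolution (P F : ℝ → ℝ) : Prop where
  differentiableAt : ∀ ρ ∈ Ioi (0:ℝ), DifferentiableAt ℝ F ρ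
  differentiableAt_deriv : ∀ ρ ∈ Ioi (0:ℝ), DifferentiableAt ℝ (deriv F) ρ
  ode : ∀ ρ ∈ Ioi (0:ℝ), ρ ^ 2 * deriv (deriv F) ρ = (F ρ ^ 2 - 1) * F ρ - P ρ * F ρ

namespace IsFEquationSolution

variable {P F F₁ F₂ : ℝ → ℝ}

theorem hasDerivAt_wronskian (h₁ : IsFEquationSolution P F₁) (h₂ : IsFEquationSolution P F₂)
    {ρ : ℝ} (hρ : ρ ∈ Ioi 0) :
    HasDerivAt (wronskian F₂ F₁) (F₁ ρ * F₂ ρ * (F₁ ρ ^ 2 - F₂ ρ ^ 2) / ρ ^ 2) ρ := by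
  refine (_root_.hasDerivAt_wronskian (h₂.differentiableAt ρ hρ)
    (h₂.differentiableAt_deriv ρ hρ) (h₁.differentiableAt ρ hρ)
    (h₁.differentiableAt_deriv ρ hρ)).congr_deriv ?_
  have hρ₀ : ρ ≠ 0 := (mem_Ioi.mp hρ).ne'
  field_simp
  linear_combination F₂ ρ * h₁.ode ρ hρ - F₁ ρ * h₂.ode ρ hρ

-- `P ≤ -1` makes `ρ² F'' = F (F² - 1 - P)` nonnegative wherever `F > 0`
theorem monotoneOn_deriv (hF : IsFEquationSolution P F) {R : ℝ} (hR : 0 < R)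
    (hP : ∀ ρ ∈ Ici R, P ρ ≤ -1) (hpos : ∀ ρ ∈ Ici R, 0 < F ρ) :
    MonotoneOn (deriv F) (Ici R) := by
  have hIci : Ici R ⊆ Ioi 0 := fun ρ hρ => hR.trans_le hρ
  refine monotoneOn_of_deriv_nonneg (convex_Ici R)
    (fun ρ hρ => (hF.differentiableAt_deriv ρ (hIci hρ)).continuousAt.continuousWithinAt)
    (fun ρ hρ => (hF.differentiableAt_deriv ρ (hIci (interior_subset hρ))).differentiableWithinAt)
    fun ρ hρ => ?_
  have hρ' := interior_subset hρ
  have hρ₀ : 0 < ρ := hIci hρ'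
  have hFρ := hpos ρ hρ'
  have hPρ := hP ρ hρ'
  have hsq : 0 ≤ ρ ^ 2 * deriv (deriv F) ρ := by
    rw [hF.ode ρ hρ₀]
    nlinarith [sq_nonneg (F ρ)]
  exact nonneg_of_mul_nonneg_right (by linarith) (pow_pos hρ₀ 2)

theorem tendsto_deriv_atTop (hF : IsFEquationSolution P F) (hP : ∀ᶠ ρ in atTop, P ρ ≤ -1)
    (hpos : ∀ᶠ ρ in atTop, 0 < F ρ) {l : ℝ} (hlim : Tendsto F atTop (𝓝 l)) :
    Tendsto (deriv F) atTop (𝓝 0) := by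
  obtain ⟨R, hR⟩ := eventually_atTop.mp ((hP.and hpos).and (eventually_gt_atTop 0))
  exact tendsto_deriv_zero_of_monotoneOn_deriv
    (fun ρ hρ => hF.differentiableAt ρ (hR ρ hρ).2)
    (hF.monotoneOn_deriv (hR R le_rfl).2 (fun ρ hρ => (hR ρ hρ).1.1) fun ρ hρ => (hR ρ hρ).1.2)
    hlim

theorem le_of_apply_zero_le (h₁ : IsFEquationSolution P F₁) (h₂ : IsFEquationSolution P F₂)
    (hP : ∀ᶠ ρ in atTop, P ρ ≤ -1)
    (hc₁ : ContinuousOn F₁ (Ici 0)) (hc₂ : ContinuousOn F₂ (Ici 0))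
    (hpos₁ : ∀ ρ ∈ Ici (0:ℝ), 0 < F₁ ρ) (hpos₂ : ∀ ρ ∈ Ici (0:ℝ), 0 < F₂ ρ)
    {l₁ l₂ : ℝ} (hlim₁ : Tendsto F₁ atTop (𝓝 l₁)) (hlim₂ : Tendsto F₂ atTop (𝓝 l₂))
    (h₀ : F₁ 0 ≤ F₂ 0) :
    ∀ ρ ∈ Ici (0:ℝ), F₁ ρ ≤ F₂ ρ := by
  have hposAt : ∀ {F : ℝ → ℝ}, (∀ ρ ∈ Ici (0:ℝ), 0 < F ρ) → ∀ᶠ ρ in atTop, 0 < F ρ :=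
    fun hpos => (eventually_ge_atTop 0).mono hpos
  refine le_of_deriv_wronskian_pos hc₁ hc₂ h₁.differentiableAt h₂.differentiableAt hpos₂ h₀
    (fun ρ hρ => (h₁.hasDerivAt_wronskian h₂ hρ).differentiableAt) (fun ρ hρ hlt => ?_) ?_
  · rw [(h₁.hasDerivAt_wronskian h₂ hρ).deriv]
    have hF₂ := hpos₂ ρ (mem_Ici.mpr (le_of_lt hρ))
    have hF₁ := hF₂.trans hlt
    exact div_pos (mul_pos (mul_pos hF₁ hF₂) (by nlinarith)) (pow_pos hρ 2)
  · have := (hlim₂.mul (h₁.tendsto_deriv_atTop hP (hposAt hpos₁) hlim₁)).sub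
      ((h₂.tendsto_deriv_atTop hP (hposAt hpos₂) hlim₂).mul hlim₁)
    rwa [mul_zero, zero_mul, sub_zero] at this

end IsFEquationSolution

theorem tendsto_sq_mul_sq_sub_sq_atTop {J h : ℝ → ℝ} {C : ℝ} (hC : |C| < 1)
    (hh : Tendsto h atTop (𝓝 1)) (hJ : Tendsto (fun ρ => J ρ / ρ) atTop (𝓝 C)) :
    Tendsto (fun ρ => ρ ^ 2 * h ρ ^ 2 - J ρ ^ 2) atTop atTop := by
  have hC2 : 0 < 1 - C ^ 2 := by nlinarith [abs_nonneg C, sq_abs C]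
  have hlim : Tendsto (fun ρ => h ρ ^ 2 - (J ρ / ρ) ^ 2) atTop (𝓝 (1 - C ^ 2)) := by
    simpa using (hh.pow 2).sub (hJ.pow 2)
  refine ((tendsto_pow_atTop two_ne_zero).atTop_mul_pos hC2 hlim).congr' ?_
  filter_upwards [eventually_ne_atTop 0] with ρ hρ
  field_simp

theorem F_bvp_uniqueness_general
    (C : ℝ) (hC0 : 0 ≤ C) (hC1 : C < 1)
    (J h : ℝ → ℝ)
    (hhlim : Tendsto h atTop (𝓝 1))
    (hJlim : Tendsto (fun ρ => J ρ / ρ) atTop (𝓝 C))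
    (F₁ F₂ : ℝ → ℝ)
    (hF₁C1 : ContDiffOn ℝ 1 F₁ (Ici 0)) (hF₂C1 : ContDiffOn ℝ 1 F₂ (Ici 0))
    (hF₁diff : ∀ ρ ∈ Ioi (0:ℝ), DifferentiableAt ℝ F₁ ρ ∧ DifferentiableAt ℝ (deriv F₁) ρ)
    (hF₂diff : ∀ ρ ∈ Ioi (0:ℝ), DifferentiableAt ℝ F₂ ρ ∧ DifferentiableAt ℝ (deriv F₂) ρ)
    (hF₁ode : ∀ ρ ∈ Ioi (0:ℝ), ρ ^ 2 * deriv (deriv F₁) ρ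
      = (F₁ ρ ^ 2 - 1) * F₁ ρ - (J ρ ^ 2 - ρ ^ 2 * h ρ ^ 2) * F₁ ρ)
    (hF₂ode : ∀ ρ ∈ Ioi (0:ℝ), ρ ^ 2 * deriv (deriv F₂) ρ
      = (F₂ ρ ^ 2 - 1) * F₂ ρ - (J ρ ^ 2 - ρ ^ 2 * h ρ ^ 2) * F₂ ρ)
    (hF₁0 : F₁ 0 = 1) (hF₂0 : F₂ 0 = 1)
    (hF₁lim : Tendsto F₁ atTop (𝓝 0)) (hF₂lim : Tendsto F₂ atTop (𝓝 0))
    (hF₁ne : ∀ ρ ∈ Ici (0:ℝ), F₁ ρ ≠ 0) (hF₂ne : ∀ ρ ∈ Ici (0:ℝ), F₂ ρ ≠ 0) :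
    EqOn F₁ F₂ (Ici 0) := by
  have hP : ∀ᶠ ρ in atTop, J ρ ^ 2 - ρ ^ 2 * h ρ ^ 2 ≤ -1 := by
    filter_upwards [(tendsto_sq_mul_sq_sub_sq_atTop (abs_lt.mpr ⟨by linarith, hC1⟩) hhlim
      hJlim).eventually_ge_atTop 1] with ρ hρ
    linarith
  have hsol₁ : IsFEquationSolution (fun ρ => J ρ ^ 2 - ρ ^ 2 * h ρ ^ 2) F₁ :=
    ⟨fun ρ hρ => (hF₁diff ρ hρ).1, fun ρ hρ => (hF₁diff ρ hρ).2, hF₁ode⟩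
  have hsol₂ : IsFEquationSolution (fun ρ => J ρ ^ 2 - ρ ^ 2 * h ρ ^ 2) F₂ :=
    ⟨fun ρ hρ => (hF₂diff ρ hρ).1, fun ρ hρ => (hF₂diff ρ hρ).2, hF₂ode⟩
  have hpos₁ := isPreconnected_Ici.pos_of_ne_zero hF₁C1.continuousOn self_mem_Ici
    (hF₁0 ▸ one_pos) hF₁ne
  have hpos₂ := isPreconnected_Ici.pos_of_ne_zero hF₂C1.continuousOn self_mem_Ici
    (hF₂0 ▸ one_pos) hF₂ne
  intro ρ hρ
  exact le_antisymm
    (hsol₁.le_of_apply_zero_le hsol₂ hP hF₁C1.continuousOn hF₂C1.continuousOn hpos₁ hpos₂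
      hF₁lim hF₂lim (hF₁0.trans hF₂0.symm).le ρ hρ)
    (hsol₂.le_of_apply_zero_le hsol₁ hP hF₂C1.continuousOn hF₁C1.continuousOn hpos₂ hpos₁
      hF₂lim hF₁lim (hF₂0.trans hF₁0.symm).le ρ hρ)

/-- Uniqueness for the boundary value problem of the `F`-equation among nonvanishing
solutions, under the standing hypotheses on `(J, h)`. -/
theorem F_bvp_uniqueness
    (C k Rstar : ℝ) (hC0 : 0 ≤ C) (hC1 : C < 1) (hk0 : 0 < k) (hk1 : k < 1)
    (hRstar : 0 < Rstar) (J h : ℝ → ℝ)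
    (hJcont : ContinuousOn J (Ici 0)) (hhcont : ContinuousOn h (Ici 0))
    (hJmono : MonotoneOn J (Ici 0)) (hhmono : MonotoneOn h (Ici 0))
    (hJ0 : J 0 = 0) (hh0 : h 0 = 0)
    (hsmall : ∀ ρ ∈ Ioc (0:ℝ) 1, 0 < J ρ ∧ J ρ ≤ ρ ^ (1 + k) * Rstar ∧
      0 < ρ * h ρ ∧ ρ * h ρ ≤ ρ ^ (1 + k) * Rstar)
    (hhlim : Tendsto h atTop (𝓝 1))
    (hJlim : Tendsto (fun ρ => J ρ / ρ) atTop (𝓝 C))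
    (F₁ F₂ : ℝ → ℝ)
    (hF₁C1 : ContDiffOn ℝ 1 F₁ (Ici 0)) (hF₂C1 : ContDiffOn ℝ 1 F₂ (Ici 0))
    (hF₁diff : ∀ ρ ∈ Ioi (0:ℝ), DifferentiableAt ℝ F₁ ρ ∧ DifferentiableAt ℝ (deriv F₁) ρ)
    (hF₂diff : ∀ ρ ∈ Ioi (0:ℝ), DifferentiableAt ℝ F₂ ρ ∧ DifferentiableAt ℝ (deriv F₂) ρ)
    (hF₁ode : ∀ ρ ∈ Ioi (0:ℝ), ρ ^ 2 * deriv (deriv F₁) ρ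
      = (F₁ ρ ^ 2 - 1) * F₁ ρ - (J ρ ^ 2 - ρ ^ 2 * h ρ ^ 2) * F₁ ρ)
    (hF₂ode : ∀ ρ ∈ Ioi (0:ℝ), ρ ^ 2 * deriv (deriv F₂) ρ
      = (F₂ ρ ^ 2 - 1) * F₂ ρ - (J ρ ^ 2 - ρ ^ 2 * h ρ ^ 2) * F₂ ρ)
    (hF₁0 : F₁ 0 = 1) (hF₂0 : F₂ 0 = 1)
    (hF₁lim : Tendsto F₁ atTop (𝓝 0)) (hF₂lim : Tendsto F₂ atTop (𝓝 0))
    (hF₁ne : ∀ ρ ∈ Ici (0:ℝ), F₁ ρ ≠ 0) (hF₂ne : ∀ ρ ∈ Ici (0:ℝ), F₂ ρ ≠ 0) :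
    EqOn F₁ F₂ (Ici 0) :=
  F_bvp_uniqueness_general C hC0 hC1 J h hhlim hJlim F₁ F₂ hF₁C1 hF₂C1 hF₁diff hF₂diff hF₁ode hF₂ode
    hF₁0 hF₂0 hF₁lim hF₂lim hF₁ne hF₂ne
end

section
/- Let f be a twice continuously differentiable function on an interval (−∞,S) solving the autonomous equation f''(s)−f'(s)=2f(s)+3f(s)²+f(s)³, with f(s)→0 and f'(s)→0 as s→−∞ and with ∫_{−∞}^s (f'(α))² dα finite for each s<S. Then for every s<S one has the identity (f'(s))² = 2 f(s)² (f(s)/2+1)² + 2∫_{−∞}^s (f'(α))² dα. -/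
/-!
Multiplying the equation by `f'` shows that the energy `E = (f')² - 2 V(f)`, where
`V(x) = x² (x/2 + 1)²` is a primitive of `2x + 3x² + x³`, satisfies `E' = 2 (f')²`
(the friction term `-f'` is what makes the energy non-conserved). Since `f, f' → 0` at `-∞`,
`E → V(0) = 0` there, and the identity is the improper fundamental theorem of calculus
for `E` on `(-∞, s]`.
-/

open Real Set Filter Topology MeasureTheory

theorem hasDerivAt_sq_sub_two_mul_potential {f f' V F : ℝ → ℝ} {t f'' : ℝ}
    (hf : HasDerivAt f (f' t) t) (hf' : HasDerivAt f' f'' t)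
    (hV : HasDerivAt V (F (f t)) (f t)) (hode : f'' - f' t = F (f t)) :
    HasDerivAt (fun u => f' u ^ 2 - 2 * V (f u)) (2 * f' t ^ 2) t := by
  refine ((hf'.pow 2).sub ((hV.comp t hf).const_mul 2)).congr_deriv ?_
  simp only [Nat.cast_ofNat]
  linear_combination (2 * f' t) * hode

theorem ContDiffOn.hasDerivAt_deriv_of_isOpen {f : ℝ → ℝ} {U : Set ℝ}
    (hf : ContDiffOn ℝ 2 f U) (hU : IsOpen U) {t : ℝ} (ht : t ∈ U) :
    HasDerivAt f (deriv f t) t ∧ HasDerivAt (deriv f) (deriv (deriv f) t) t := by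
  have hf' : ContDiffOn ℝ 1 (deriv f) U := hf.deriv_of_isOpen hU (by norm_num)
  exact ⟨((hf.differentiableOn (by norm_num)).differentiableAt (hU.mem_nhds ht)).hasDerivAt,
    ((hf'.differentiableOn one_ne_zero).differentiableAt (hU.mem_nhds ht)).hasDerivAt⟩

theorem two_mul_integral_Iio_sq_deriv_eq {S s : ℝ} {f V F : ℝ → ℝ}
    (hreg : ContDiffOn ℝ 2 f (Iio S)) (hV : ∀ x, HasDerivAt V (F x) x)
    (hode : ∀ t ∈ Iio S, deriv (deriv f) t - deriv f t = F (f t))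
    (hE : Tendsto (fun t => deriv f t ^ 2 - 2 * V (f t)) atBot (𝓝 0))
    (hs : s < S) (hint : IntegrableOn (fun α => deriv f α ^ 2) (Iio s)) :
    2 * ∫ α in Iio s, deriv f α ^ 2 = deriv f s ^ 2 - 2 * V (f s) := by
  have hderiv : ∀ t ∈ Iic s, HasDerivAt (fun u => deriv f u ^ 2 - 2 * V (f u))
      (2 * deriv f t ^ 2) t := by
    intro t ht
    have htS : t ∈ Iio S := lt_of_le_of_lt ht hs
    obtain ⟨hf, hf'⟩ := hreg.hasDerivAt_deriv_of_isOpen isOpen_Iio htS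
    exact hasDerivAt_sq_sub_two_mul_potential hf hf' (hV _) (hode t htS)
  have hint' : IntegrableOn (fun α => 2 * deriv f α ^ 2) (Iic s) :=
    (integrableOn_Iic_iff_integrableOn_Iio).mpr (hint.const_mul 2)
  rw [← integral_const_mul, ← integral_Iic_eq_integral_Iio,
    integral_Iic_of_hasDerivAt_of_tendsto' hderiv hint' hE, sub_zero]

theorem hasDerivAt_sq_mul_half_add_one_sq (x : ℝ) :
    HasDerivAt (fun y : ℝ => y ^ 2 * (y / 2 + 1) ^ 2) (2 * x + 3 * x ^ 2 + x ^ 3) x := by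
  refine (((hasDerivAt_id' x).pow 2).mul
    ((((hasDerivAt_id' x).div_const 2).add_const 1).pow 2)).congr_deriv ?_
  simp only [Pi.pow_apply]
  ring

/-- Energy identity for the rescaled autonomous equation `f'' - f' = 2f + 3f² + f³` on
`(-∞, S)` with decay at `-∞`:
`(f'(s))² = 2 f(s)² (f(s)/2 + 1)² + 2 ∫_{-∞}^s (f'(α))² dα`. -/
theorem energy_identity_autonomous (S : ℝ) (f : ℝ → ℝ)
    (hreg : ContDiffOn ℝ 2 f (Iio S))
    (hode : ∀ s ∈ Iio S, deriv (deriv f) s - deriv f s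
      = 2 * f s + 3 * f s ^ 2 + f s ^ 3)
    (hf : Tendsto f atBot (𝓝 0))
    (hf' : Tendsto (deriv f) atBot (𝓝 0))
    (hint : ∀ s ∈ Iio S, IntegrableOn (fun α => (deriv f α) ^ 2) (Iio s)) :
    ∀ s ∈ Iio S, (deriv f s) ^ 2
      = 2 * f s ^ 2 * (f s / 2 + 1) ^ 2 + 2 * ∫ α in Iio s, (deriv f α) ^ 2 := by
  intro s hs
  have hE : Tendsto (fun t => deriv f t ^ 2 - 2 * (f t ^ 2 * (f t / 2 + 1) ^ 2))
      atBot (𝓝 0) := by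
    simpa using (hf'.pow 2).sub
      (((hf.pow 2).mul ((hf.div_const 2).add_const 1 |>.pow 2)).const_mul 2)
  have hintegral := two_mul_integral_Iio_sq_deriv_eq hreg hasDerivAt_sq_mul_half_add_one_sq
    hode hE hs (hint s hs)
  linarith
end

section
/- Let f be a twice continuously differentiable solution on its maximal interval of existence (−∞,S) of f''(s)−f'(s)=2f(s)+3f(s)²+f(s)³, with f(s)→0 and f'(s)→0 as s→−∞, f not identically zero, and f'(s)<0 for all s in a neighborhood of −∞. Then f'(s)<0 for every s<S, f(s) is unbounded below as s→S (it tends to −∞), and there exists a finite s₀<S with f(s₀)=−1; that is, f decreases monotonically and crosses the value −1 at a finite point. -/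
open Real Set Filter Topology

/-!
The energy `E = f'²/2 - V(f)`, where `V(x) = x² + x³ + x⁴/4 = (x(x+2))²/4 ≥ 0` is a primitive
of the right-hand side `F`, satisfies `E' = f'² ≥ 0`. It tends to `0` at `-∞` and strictly
increases on the initial interval where `f' < 0`, so `E > 0` everywhere; since `E = -V(f) ≤ 0`
wherever `f' = 0`, the derivative never vanishes and stays negative. If the decreasing function
`f` stayed bounded below at `S`, then `e^{-s} f'`, whose derivative `e^{-s} F(f)` is bounded, and
hence `f'` would converge at `S`; local existence for the first-order system through the limit
of `(f, f')` would extend the solution beyond `S`. So `f → -∞`, and it crosses `-1` by the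
intermediate value theorem.
-/

lemma exists_tendsto_nhdsLT_of_hasDerivAt_of_abs_le {g g' : ℝ → ℝ} {a b C : ℝ} (hab : a < b)
    (hg : ∀ x ∈ Ioo a b, HasDerivAt g (g' x) x) (hC : ∀ x ∈ Ioo a b, |g' x| ≤ C) :
    ∃ l, Tendsto g (𝓝[<] b) (𝓝 l) := by
  have hlip : LipschitzOnWith C.toNNReal g (Ioo a b) :=
    (convex_Ioo a b).lipschitzOnWith_of_nnnorm_hasDerivWithin_le
      (fun x hx => (hg x hx).hasDerivWithinAt) fun x hx => by
        rw [← NNReal.coe_le_coe, coe_nnnorm, Real.norm_eq_abs]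
        exact (hC x hx).trans (le_coe_toNNReal C)
  obtain ⟨h, hh, hgh⟩ := hlip.extend_real
  refine ⟨h b, (hh.continuous.continuousWithinAt (s := Iio b)).tendsto.congr' ?_⟩
  filter_upwards [Ioo_mem_nhdsLT hab] with x hx using (hgh hx).symm

lemma exists_hasDerivAt_extension_of_tendsto {E : Type*} [NormedAddCommGroup E]
    [NormedSpace ℝ E] [CompleteSpace E] {v : E → E} {γ : ℝ → E} {S : ℝ} {P : E}
    (hv : ContDiffAt ℝ 1 v P) (hγ : ∀ t < S, HasDerivAt γ (v (γ t)) t)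
    (hP : Tendsto γ (𝓝[<] S) (𝓝 P)) :
    ∃ S' > S, ∃ g : ℝ → E, EqOn g γ (Iio S) ∧ ∀ t < S', HasDerivAt g (v (g t)) t := by
  obtain ⟨α, hα0, ε, hε, hα⟩ :=
    hv.exists_forall_mem_closedBall_exists_eq_forall_mem_Ioo_hasDerivAt₀ S
  -- glue `γ` to a local solution started from `P` at time `S`; at `S` the one-sided derivatives
  -- are `lim γ' = v P` and `α' S = v P`
  let g := (Iio S).piecewise γ α
  have hgγ : EqOn g γ (Iio S) := fun t ht => Set.piecewise_eq_of_mem _ _ _ ht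
  have hgα : EqOn g α (Ici S) := fun t ht => Set.piecewise_eq_of_notMem _ _ _ (notMem_Iio.2 ht)
  have hgd : ∀ t < S, HasDerivAt g (v (γ t)) t := fun t ht =>
    (hγ t ht).congr_of_eventuallyEq (eventuallyEq_of_mem (Iio_mem_nhds ht) hgγ)
  refine ⟨S + ε, by linarith, g, hgγ, fun t ht => ?_⟩
  rcases lt_trichotomy t S with hts | rfl | hts
  · rw [hgγ hts]
    exact hgd t hts
  · have hgt : g t = P := (hgα self_mem_Ici).trans hα0
    have hleft : HasDerivWithinAt g (v P) (Iic t) t := by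
      refine hasDerivWithinAt_Iic_of_tendsto_deriv (s := Iio t) (fun x hx => ?_) ?_
        self_mem_nhdsWithin ?_
      · exact (hgd x hx).differentiableAt.differentiableWithinAt
      · rw [ContinuousWithinAt, hgt]
        exact hP.congr' (eventuallyEq_of_mem self_mem_nhdsWithin hgγ.symm)
      · refine ((hv.continuousAt.tendsto).comp hP).congr' ?_
        filter_upwards [self_mem_nhdsWithin] with x hx
        exact (hgd x hx).deriv.symm
    have hright : HasDerivWithinAt g (v P) (Ici t) t := by
      rw [← hα0]
      exact (hα t ⟨by linarith, by linarith⟩).hasDerivWithinAt.congr hgα (hgα self_mem_Ici)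
    rw [hgt, ← hasDerivWithinAt_univ, ← Iic_union_Ici]
    exact hleft.union hright
  · rw [hgα hts.le]
    exact (hα t ⟨by linarith, ht⟩).congr_of_eventuallyEq
      (eventuallyEq_of_mem (Ici_mem_nhds hts) hgα)

lemma AntitoneOn.tendsto_nhdsLT_atBot_or_exists {g : ℝ → ℝ} {S : ℝ}
    (hg : AntitoneOn g (Iio S)) :
    Tendsto g (𝓝[<] S) atBot ∨ ∃ l, Tendsto g (𝓝[<] S) (𝓝 l) := by
  by_cases hbdd : BddBelow (g '' Iio S)
  · exact Or.inr ⟨_, hg.tendsto_nhdsLT hbdd⟩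
  · refine Or.inl (tendsto_atBot.2 fun b => ?_)
    obtain ⟨_, ⟨x, hx, rfl⟩, hxb⟩ := not_bddBelow_iff.1 hbdd b
    filter_upwards [Ioo_mem_nhdsLT hx] with y hy
    exact (hg hx hy.2 hy.1.le).trans hxb.le

lemma exists_eq_of_tendsto_atBot_of_tendsto_nhdsLT {g : ℝ → ℝ} {S a y : ℝ}
    (hg : ContinuousOn g (Iio S)) (ha : Tendsto g atBot (𝓝 a))
    (hS : Tendsto g (𝓝[<] S) atBot) (hy : y < a) : ∃ s < S, g s = y := by
  obtain ⟨s₂, hs₂, hs₂S⟩ := ((hS.eventually (eventually_lt_atBot y)).and self_mem_nhdsWithin).exists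
  obtain ⟨s₁, hs₁, hs₁S⟩ :=
    ((ha.eventually (eventually_gt_nhds hy)).and (eventually_lt_atBot S)).exists
  exact isPreconnected_Iio.intermediate_value hs₂S hs₁S hg ⟨hs₂.le, hs₁.le⟩

noncomputable section

namespace JuliaZee

def force (x : ℝ) : ℝ := 2 * x + 3 * x ^ 2 + x ^ 3

def potential (x : ℝ) : ℝ := x ^ 2 + x ^ 3 + x ^ 4 / 4

def energy (f : ℝ → ℝ) (s : ℝ) : ℝ := deriv f s ^ 2 / 2 - potential (f s)

def vectorField (p : ℝ × ℝ) : ℝ × ℝ := (p.2, p.2 + force p.1)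

lemma continuous_force : Continuous force := by unfold force; fun_prop

lemma potential_nonneg (x : ℝ) : 0 ≤ potential x := by
  have h : potential x = (x * (x + 2)) ^ 2 / 4 := by unfold potential; ring
  rw [h]; positivity

lemma hasDerivAt_potential (x : ℝ) : HasDerivAt potential (force x) x := by
  unfold potential force
  exact (((hasDerivAt_pow 2 x).add (hasDerivAt_pow 3 x)).add
    ((hasDerivAt_pow 4 x).div_const 4)).congr_deriv (by norm_num)

lemma continuous_potential : Continuous potential := by unfold potential; fun_prop

lemma contDiff_vectorField : ContDiff ℝ 1 vectorField := by
  unfold vectorField force; fun_prop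

section Solution

variable {S : ℝ} {f : ℝ → ℝ}

lemma hasDerivAt_of_contDiffOn (hreg : ContDiffOn ℝ 2 f (Iio S)) {s : ℝ} (hs : s < S) :
    HasDerivAt f (deriv f s) s :=
  ((hreg.differentiableOn (by norm_num)).differentiableAt (Iio_mem_nhds hs)).hasDerivAt

lemma hasDerivAt_deriv (hreg : ContDiffOn ℝ 2 f (Iio S))
    (hode : ∀ s ∈ Iio S, deriv (deriv f) s - deriv f s = force (f s)) {s : ℝ} (hs : s < S) :
    HasDerivAt (deriv f) (deriv f s + force (f s)) s := by
  have hd : DifferentiableAt ℝ (deriv f) s :=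
    ((hreg.deriv_of_isOpen isOpen_Iio (m := 1) (by norm_num)).differentiableOn one_ne_zero)
      |>.differentiableAt (Iio_mem_nhds hs)
  exact hd.hasDerivAt.congr_deriv (by linarith [hode s hs])

lemma hasDerivAt_energy (hreg : ContDiffOn ℝ 2 f (Iio S))
    (hode : ∀ s ∈ Iio S, deriv (deriv f) s - deriv f s = force (f s)) {s : ℝ} (hs : s < S) :
    HasDerivAt (energy f) (deriv f s ^ 2) s :=
  ((((hasDerivAt_deriv hreg hode hs).pow 2).div_const 2).sub
    ((hasDerivAt_potential (f s)).comp s (hasDerivAt_of_contDiffOn hreg hs))).congr_deriv (by ring)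

lemma monotoneOn_energy (hreg : ContDiffOn ℝ 2 f (Iio S))
    (hode : ∀ s ∈ Iio S, deriv (deriv f) s - deriv f s = force (f s)) :
    MonotoneOn (energy f) (Iio S) := by
  refine monotoneOn_of_hasDerivWithinAt_nonneg (f' := fun s => deriv f s ^ 2) (convex_Iio S)
    (fun s hs => (hasDerivAt_energy hreg hode hs).continuousAt.continuousWithinAt)
    (fun s hs => ?_) fun s _ => sq_nonneg _
  rw [interior_Iio] at hs
  exact (hasDerivAt_energy hreg hode hs).hasDerivWithinAt

lemma tendsto_energy_atBot (hf : Tendsto f atBot (𝓝 0)) (hf' : Tendsto (deriv f) atBot (𝓝 0)) :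
    Tendsto (energy f) atBot (𝓝 0) := by
  rw [show (0 : ℝ) = 0 ^ 2 / 2 - potential 0 by simp [potential]]
  exact ((hf'.pow 2).div_const 2).sub ((continuous_potential.tendsto 0).comp hf)

lemma energy_pos (hreg : ContDiffOn ℝ 2 f (Iio S))
    (hode : ∀ s ∈ Iio S, deriv (deriv f) s - deriv f s = force (f s))
    (hf : Tendsto f atBot (𝓝 0)) (hf' : Tendsto (deriv f) atBot (𝓝 0))
    {s₁ : ℝ} (hs₁S : s₁ < S) (hs₁ : ∀ s < s₁, deriv f s < 0) {s : ℝ} (hs : s < S) :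
    0 < energy f s := by
  have hmono := monotoneOn_energy hreg hode
  have hnonneg : ∀ t < S, 0 ≤ energy f t := fun t ht =>
    le_of_tendsto (tendsto_energy_atBot hf hf') <| by
      filter_upwards [eventually_le_atBot t] with u hu using hmono (hu.trans_lt ht) ht hu
  have hstrict : StrictMonoOn (energy f) (Iio s₁) := by
    refine strictMonoOn_of_hasDerivWithinAt_pos (f' := fun t => deriv f t ^ 2) (convex_Iio s₁)
      (fun t ht => (hasDerivAt_energy hreg hode (ht.trans hs₁S)).continuousAt.continuousWithinAt)
      (fun t ht => ?_) fun t ht => ?_ <;> rw [interior_Iio] at ht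
    · exact (hasDerivAt_energy hreg hode (ht.trans hs₁S)).hasDerivWithinAt
    · exact sq_pos_of_neg (hs₁ t ht)
  set u := min s s₁ - 1
  have hu : u < s₁ := by linarith [min_le_right s s₁]
  calc 0 ≤ energy f (u - 1) := hnonneg _ (by linarith)
    _ < energy f u := hstrict (by simp only [mem_Iio]; linarith) hu (by linarith)
    _ ≤ energy f s := hmono (by simp only [mem_Iio]; linarith) hs (by linarith [min_le_left s s₁])

lemma deriv_lt_zero (hreg : ContDiffOn ℝ 2 f (Iio S))
    (hode : ∀ s ∈ Iio S, deriv (deriv f) s - deriv f s = force (f s))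
    (hf : Tendsto f atBot (𝓝 0)) (hf' : Tendsto (deriv f) atBot (𝓝 0))
    {s₁ : ℝ} (hs₁S : s₁ < S) (hs₁ : ∀ s < s₁, deriv f s < 0) {s : ℝ} (hs : s < S) :
    deriv f s < 0 := by
  by_contra! hs0
  obtain ⟨c, hc, hc0⟩ := isPreconnected_Iio.intermediate_value
    (show s₁ - 1 ∈ Iio S by simp only [mem_Iio]; linarith) hs
    (hreg.continuousOn_deriv_of_isOpen isOpen_Iio (by norm_num))
    ⟨(hs₁ _ (by linarith)).le, hs0⟩
  have hE := energy_pos hreg hode hf hf' hs₁S hs₁ hc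
  rw [energy, hc0] at hE
  linarith [potential_nonneg (f c)]

lemma exists_tendsto_deriv_nhdsLT (hreg : ContDiffOn ℝ 2 f (Iio S))
    (hode : ∀ s ∈ Iio S, deriv (deriv f) s - deriv f s = force (f s))
    {L : ℝ} (hL : Tendsto f (𝓝[<] S) (𝓝 L)) : ∃ m, Tendsto (deriv f) (𝓝[<] S) (𝓝 m) := by
  obtain ⟨a, haS, ha⟩ := mem_nhdsLT_iff_exists_Ioo_subset.1
    (hL (Icc_mem_nhds (sub_one_lt L) (lt_add_one L)))
  obtain ⟨M, hM⟩ := isCompact_Icc.exists_bound_of_continuousOn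
    (continuous_force.continuousOn (s := Icc (L - 1) (L + 1)))
  -- `e^{-s} f'` has derivative `e^{-s} F(f)`, which stays bounded as long as `f` does
  have hW : ∀ s ∈ Ioo a S, HasDerivAt (fun s => exp (-s) * deriv f s)
      (exp (-s) * force (f s)) s := fun s hs =>
    ((hasDerivAt_neg s).exp.mul (hasDerivAt_deriv hreg hode hs.2)).congr_deriv (by ring)
  have hbound : ∀ s ∈ Ioo a S, |exp (-s) * force (f s)| ≤ exp (-a) * M := fun s hs => by
    rw [abs_mul, abs_of_pos (exp_pos _)]
    exact mul_le_mul (exp_le_exp.2 (by linarith [hs.1])) (hM _ (ha hs)) (abs_nonneg _)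
      (exp_pos _).le
  obtain ⟨w, hw⟩ := exists_tendsto_nhdsLT_of_hasDerivAt_of_abs_le haS hW hbound
  refine ⟨exp S * w, (((continuous_exp.tendsto S).mono_left nhdsWithin_le_nhds).mul hw).congr ?_⟩
  intro s
  rw [← mul_assoc, ← exp_add, add_neg_cancel, exp_zero, one_mul]

lemma hasDerivAt_phase (hreg : ContDiffOn ℝ 2 f (Iio S))
    (hode : ∀ s ∈ Iio S, deriv (deriv f) s - deriv f s = force (f s)) {s : ℝ} (hs : s < S) :
    HasDerivAt (fun t => (f t, deriv f t)) (vectorField (f s, deriv f s)) s :=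
  (hasDerivAt_of_contDiffOn hreg hs).prodMk (hasDerivAt_deriv hreg hode hs)

lemma contDiffOn_fst_of_hasDerivAt_vectorField {γ : ℝ → ℝ × ℝ} {U : Set ℝ} (hU : IsOpen U)
    (hγ : ∀ t ∈ U, HasDerivAt γ (vectorField (γ t)) t) :
    ContDiffOn ℝ 2 (fun t => (γ t).1) U ∧
      ∀ t ∈ U, deriv (deriv fun t => (γ t).1) t - deriv (fun t => (γ t).1) t = force (γ t).1 := by
  have hγ1 : ContDiffOn ℝ 1 γ U := by
    rw [show (1 : WithTop ℕ∞) = 0 + 1 from rfl, contDiffOn_succ_iff_deriv_of_isOpen hU]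
    refine ⟨fun t ht => (hγ t ht).differentiableAt.differentiableWithinAt, by simp, ?_⟩
    rw [contDiffOn_zero]
    exact (contDiff_vectorField.continuous.comp_continuousOn
      fun t ht => (hγ t ht).continuousAt.continuousWithinAt).congr fun t ht => (hγ t ht).deriv
  have hfst : ∀ t ∈ U, HasDerivAt (fun t => (γ t).1) (γ t).2 t := fun t ht =>
    (ContinuousLinearMap.fst ℝ ℝ ℝ).hasFDerivAt.comp_hasDerivAt t (hγ t ht)
  have hsnd : ∀ t ∈ U, HasDerivAt (fun t => (γ t).2) ((γ t).2 + force (γ t).1) t := fun t ht =>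
    (ContinuousLinearMap.snd ℝ ℝ ℝ).hasFDerivAt.comp_hasDerivAt t (hγ t ht)
  have hd : EqOn (deriv fun t => (γ t).1) (fun t => (γ t).2) U := fun t ht => (hfst t ht).deriv
  refine ⟨?_, fun t ht => ?_⟩
  · rw [show (2 : WithTop ℕ∞) = 1 + 1 from rfl, contDiffOn_succ_iff_deriv_of_isOpen hU]
    exact ⟨fun t ht => (hfst t ht).differentiableAt.differentiableWithinAt, by simp,
      hγ1.snd.congr hd⟩
  · rw [(eventuallyEq_of_mem (hU.mem_nhds ht) hd).deriv_eq, hd ht, (hsnd t ht).deriv]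
    ring

lemma exists_extension_of_tendsto (hreg : ContDiffOn ℝ 2 f (Iio S))
    (hode : ∀ s ∈ Iio S, deriv (deriv f) s - deriv f s = force (f s))
    {L : ℝ} (hL : Tendsto f (𝓝[<] S) (𝓝 L)) :
    ∃ (S' : ℝ) (g : ℝ → ℝ), S < S' ∧ ContDiffOn ℝ 2 g (Iio S') ∧ EqOn g f (Iio S) ∧
      ∀ s ∈ Iio S', deriv (deriv g) s - deriv g s = force (g s) := by
  obtain ⟨m, hm⟩ := exists_tendsto_deriv_nhdsLT hreg hode hL
  obtain ⟨S', hSS', γ, hγf, hγ⟩ := exists_hasDerivAt_extension_of_tendsto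
    contDiff_vectorField.contDiffAt (fun s hs => hasDerivAt_phase hreg hode hs) (hL.prodMk_nhds hm)
  obtain ⟨hC2, hsol⟩ := contDiffOn_fst_of_hasDerivAt_vectorField isOpen_Iio hγ
  exact ⟨S', fun t => (γ t).1, hSS', hC2, fun t ht => congrArg Prod.fst (hγf ht), hsol⟩

end Solution

end JuliaZee

end

open JuliaZee in
theorem f_crosses_minus_one_general (S : ℝ) (f : ℝ → ℝ)
    (hreg : ContDiffOn ℝ 2 f (Iio S))
    (hode : ∀ s ∈ Iio S, deriv (deriv f) s - deriv f s
      = 2 * f s + 3 * f s ^ 2 + f s ^ 3)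
    (hf : Tendsto f atBot (𝓝 0))
    (hf' : Tendsto (deriv f) atBot (𝓝 0))
    (hinit : ∃ s₁ < S, ∀ s < s₁, deriv f s < 0)
    -- maximality: f admits no extension as a solution beyond S
    (hmax : ¬ ∃ (S' : ℝ) (g : ℝ → ℝ), S < S' ∧ ContDiffOn ℝ 2 g (Iio S') ∧
      EqOn g f (Iio S) ∧
      (∀ s ∈ Iio S', deriv (deriv g) s - deriv g s
        = 2 * g s + 3 * g s ^ 2 + g s ^ 3)) :
    (∀ s ∈ Iio S, deriv f s < 0) ∧
    Tendsto f (𝓝[<] S) atBot ∧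
    ∃ s₀ < S, f s₀ = -1 := by
  obtain ⟨s₁, hs₁S, hs₁⟩ := hinit
  have hneg : ∀ s ∈ Iio S, deriv f s < 0 := fun s hs =>
    deriv_lt_zero hreg hode hf hf' hs₁S hs₁ hs
  have hanti : StrictAntiOn f (Iio S) :=
    strictAntiOn_of_deriv_neg (convex_Iio S) hreg.continuousOn (by rwa [interior_Iio])
  have hblow : Tendsto f (𝓝[<] S) atBot :=
    hanti.antitoneOn.tendsto_nhdsLT_atBot_or_exists.resolve_right fun ⟨_, hL⟩ =>
      hmax (exists_extension_of_tendsto hreg hode hL)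
  exact ⟨hneg, hblow,
    exists_eq_of_tendsto_atBot_of_tendsto_nhdsLT hreg.continuousOn hf hblow (by norm_num)⟩

/-- A nontrivial solution of `f'' - f' = 2f + 3f² + f³` on its maximal interval of existence
`(-∞, S)`, decaying at `-∞` and initially strictly decreasing, is strictly decreasing
everywhere, tends to `-∞` at `S`, and crosses the value `-1` at a finite point `s₀ < S`. -/
theorem f_crosses_minus_one (S : ℝ) (f : ℝ → ℝ)
    (hreg : ContDiffOn ℝ 2 f (Iio S))
    (hode : ∀ s ∈ Iio S, deriv (deriv f) s - deriv f s
      = 2 * f s + 3 * f s ^ 2 + f s ^ 3)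
    (hf : Tendsto f atBot (𝓝 0))
    (hf' : Tendsto (deriv f) atBot (𝓝 0))
    (hnontriv : ∃ s ∈ Iio S, f s ≠ 0)
    (hinit : ∃ s₁ < S, ∀ s < s₁, deriv f s < 0)
    -- maximality: f admits no extension as a solution beyond S
    (hmax : ¬ ∃ (S' : ℝ) (g : ℝ → ℝ), S < S' ∧ ContDiffOn ℝ 2 g (Iio S') ∧
      EqOn g f (Iio S) ∧
      (∀ s ∈ Iio S', deriv (deriv g) s - deriv g s
        = 2 * g s + 3 * g s ^ 2 + g s ^ 3)) :
    (∀ s ∈ Iio S, deriv f s < 0) ∧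
    Tendsto f (𝓝[<] S) atBot ∧
    ∃ s₀ < S, f s₀ = -1 :=
  f_crosses_minus_one_general S f hreg hode hf hf' hinit hmax
end

section
/- Let 0≤C<1, let h, J be continuous on [0,∞) with h(ρ)→1 and J(ρ)/ρ→C as ρ→∞, and let f be twice differentiable on (0,∞) solving ρ²f''(ρ)=2f(ρ)+ρ²h(ρ)²(f(ρ)+1)+f(ρ)³+3f(ρ)²−J(ρ)²(f(ρ)+1). If f'(ρ)≤0 and −1<f(ρ)<0 for all ρ>0, then lim_{ρ→∞} f(ρ) = −1. -/
open Real Set Filter Topology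

/-!
Since `f' ≤ 0` and `f > -1`, the solution decreases to some limit `L ≥ -1`. With `g = f + 1`
the equation reads `f'' = (g³ - g) / ρ² + (h² - (J / ρ)²) g`, and the coefficient
`h² - (J / ρ)²` tends to `1 - C² > 0`. So if `L > -1`, then `f''` is eventually bounded below
by a positive constant, which forces `f' → ∞`, contradicting `f' ≤ 0`.
-/

theorem tendsto_atTop_of_eventually_le_deriv {g : ℝ → ℝ} {c : ℝ} (hc : 0 < c)
    (hg : ∀ᶠ x in atTop, DifferentiableAt ℝ g x) (hg' : ∀ᶠ x in atTop, c ≤ deriv g x) :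
    Tendsto g atTop atTop := by
  obtain ⟨R, hR⟩ := eventually_atTop.1 (hg.and hg')
  have hgrowth : ∀ x ≥ R, c * (x - R) ≤ g x - g R := fun x hx =>
    (convex_Ici R).mul_sub_le_image_sub_of_le_deriv
      (fun y hy => (hR y hy).1.continuousAt.continuousWithinAt)
      (fun y hy => (hR y (interior_subset hy)).1.differentiableWithinAt)
      (fun y hy => (hR y (interior_subset hy)).2) R self_mem_Ici x hx hx
  have hline : Tendsto (fun x => g R + c * (x - R)) atTop atTop :=
    tendsto_atTop_add_const_left _ _
      (tendsto_atTop_add_const_right _ _ tendsto_id |>.const_mul_atTop hc)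
  exact tendsto_atTop_mono' _ ((eventually_ge_atTop R).mono fun x hx => by
    linarith [hgrowth x hx]) hline

theorem AntitoneOn.tendsto_atTop_of_frequently_lt {α β : Type*} [SemilatticeSup α]
    [Nonempty α] [LinearOrder β] [TopologicalSpace β] [OrderTopology β] {f : α → β} {a : α}
    {L : β} (hf : AntitoneOn f (Ici a)) (hL : ∀ x ≥ a, L < f x)
    (hfreq : ∀ u > L, ∃ᶠ x in atTop, f x < u) : Tendsto f atTop (𝓝 L) := by
  refine tendsto_order.2 ⟨fun l hl => ?_, fun u hu => ?_⟩
  · filter_upwards [eventually_ge_atTop a] with x hx using hl.trans (hL x hx)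
  · obtain ⟨x₀, hx₀, hfx₀⟩ := frequently_atTop.1 (hfreq u hu) a
    filter_upwards [eventually_ge_atTop x₀] with x hx
    exact (hf hx₀ (hx₀.trans hx) hx).trans_lt hfx₀

theorem exists_pos_eventually_le_deriv_deriv {C ε : ℝ} (hC0 : 0 ≤ C) (hC1 : C < 1) {h J f : ℝ → ℝ}
    (hhlim : Tendsto h atTop (𝓝 1)) (hJlim : Tendsto (fun ρ => J ρ / ρ) atTop (𝓝 C))
    (hfode : ∀ᶠ ρ in atTop, ρ ^ 2 * deriv (deriv f) ρ
      = 2 * f ρ + ρ ^ 2 * h ρ ^ 2 * (f ρ + 1) + f ρ ^ 3 + 3 * f ρ ^ 2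
        - J ρ ^ 2 * (f ρ + 1))
    (hε : 0 < ε) (hfε : ∀ᶠ ρ in atTop, ε ≤ f ρ + 1) :
    ∃ c > 0, ∀ᶠ ρ in atTop, c ≤ deriv (deriv f) ρ := by
  have hC : 0 < 1 - C ^ 2 := by nlinarith
  set k : ℝ → ℝ := fun ρ => h ρ ^ 2 - (J ρ / ρ) ^ 2
  have hk : Tendsto k atTop (𝓝 (1 - C ^ 2)) := by
    simpa using (hhlim.pow 2).sub (hJlim.pow 2)
  have hlower : Tendsto (fun ρ => k ρ * ε - (ρ ^ 2)⁻¹) atTop (𝓝 ((1 - C ^ 2) * ε)) := by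
    simpa using (hk.mul_const ε).sub
      (tendsto_inv_atTop_zero.comp (tendsto_pow_atTop two_ne_zero))
  refine ⟨(1 - C ^ 2) * ε / 2, by positivity, ?_⟩
  filter_upwards [hk.eventually (eventually_gt_nhds hC),
    hlower.eventually (eventually_gt_nhds (half_lt_self (by positivity))),
    eventually_gt_atTop 0, hfode, hfε] with ρ hkρ hlowerρ hρ hode hfερ
  have hcubic : -1 ≤ (f ρ + 1) ^ 3 - (f ρ + 1) := by nlinarith [sq_nonneg (f ρ + 1)]
  have hJ : J ρ ^ 2 = (J ρ / ρ) ^ 2 * ρ ^ 2 := by field_simp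
  have hρ2 : 0 < ρ ^ 2 := by positivity
  have : ρ ^ 2 * (k ρ * ε - (ρ ^ 2)⁻¹) ≤ ρ ^ 2 * deriv (deriv f) ρ := by
    rw [mul_sub, mul_inv_cancel₀ hρ2.ne', hode, hJ]
    nlinarith [mul_le_mul_of_nonneg_left hfερ (mul_pos hρ2 hkρ).le]
  linarith [le_of_mul_le_mul_left this hρ2]

theorem f_limit_minus_one_general (C : ℝ) (hC0 : 0 ≤ C) (hC1 : C < 1) (h J f : ℝ → ℝ)
    (hhlim : Tendsto h atTop (𝓝 1))
    (hJlim : Tendsto (fun ρ => J ρ / ρ) atTop (𝓝 C))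
    (hfdiff : ∀ ρ ∈ Ioi (0:ℝ), DifferentiableAt ℝ f ρ ∧ DifferentiableAt ℝ (deriv f) ρ)
    (hfode : ∀ ρ ∈ Ioi (0:ℝ), ρ ^ 2 * deriv (deriv f) ρ
      = 2 * f ρ + ρ ^ 2 * h ρ ^ 2 * (f ρ + 1) + f ρ ^ 3 + 3 * f ρ ^ 2
        - J ρ ^ 2 * (f ρ + 1))
    (hf' : ∀ ρ ∈ Ioi (0:ℝ), deriv f ρ ≤ 0)
    (hfrange : ∀ ρ ∈ Ioi (0:ℝ), -1 < f ρ ∧ f ρ < 0) :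
    Tendsto f atTop (𝓝 (-1)) := by
  have hanti : AntitoneOn f (Ioi 0) :=
    antitoneOn_of_deriv_nonpos (convex_Ioi 0)
      (fun ρ hρ => (hfdiff ρ hρ).1.continuousAt.continuousWithinAt)
      (fun ρ hρ => (hfdiff ρ (interior_subset hρ)).1.differentiableWithinAt)
      (fun ρ hρ => hf' ρ (interior_subset hρ))
  refine (hanti.mono (Ici_subset_Ioi.2 one_pos)).tendsto_atTop_of_frequently_lt
    (fun ρ hρ => (hfrange ρ (one_pos.trans_le hρ)).1) fun u hu => ?_
  by_contra hnot
  have hfu : ∀ᶠ ρ in atTop, u + 1 ≤ f ρ + 1 :=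
    (not_frequently.1 hnot).mono fun ρ hρ => by linarith [not_lt.1 hρ]
  obtain ⟨c, hc, hfpp⟩ := exists_pos_eventually_le_deriv_deriv hC0 hC1 hhlim hJlim
    ((eventually_gt_atTop 0).mono hfode) (by linarith) hfu
  have hf'_top : Tendsto (deriv f) atTop atTop :=
    tendsto_atTop_of_eventually_le_deriv hc
      ((eventually_gt_atTop 0).mono fun ρ hρ => (hfdiff ρ hρ).2) hfpp
  obtain ⟨ρ, hρ, hf'ρ⟩ := ((eventually_gt_atTop 0).and (hf'_top.eventually_gt_atTop 0)).exists
  exact (hf' ρ hρ).not_gt hf'ρ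

/-- A bounded monotone trapped solution `f` of the transformed `F`-equation tends to `-1`
at infinity. -/
theorem f_limit_minus_one (C : ℝ) (hC0 : 0 ≤ C) (hC1 : C < 1) (h J f : ℝ → ℝ)
    (hhcont : ContinuousOn h (Ici 0)) (hJcont : ContinuousOn J (Ici 0))
    (hhlim : Tendsto h atTop (𝓝 1))
    (hJlim : Tendsto (fun ρ => J ρ / ρ) atTop (𝓝 C))
    (hfdiff : ∀ ρ ∈ Ioi (0:ℝ), DifferentiableAt ℝ f ρ ∧ DifferentiableAt ℝ (deriv f) ρ)
    (hfode : ∀ ρ ∈ Ioi (0:ℝ), ρ ^ 2 * deriv (deriv f) ρ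
      = 2 * f ρ + ρ ^ 2 * h ρ ^ 2 * (f ρ + 1) + f ρ ^ 3 + 3 * f ρ ^ 2
        - J ρ ^ 2 * (f ρ + 1))
    (hf' : ∀ ρ ∈ Ioi (0:ℝ), deriv f ρ ≤ 0)
    (hfrange : ∀ ρ ∈ Ioi (0:ℝ), -1 < f ρ ∧ f ρ < 0) :
    Tendsto f atTop (𝓝 (-1)) :=
  f_limit_minus_one_general C hC0 hC1 h J f hhlim hJlim hfdiff hfode hf' hfrange
end

section
/- Let β>0, let F:[0,∞)→[0,1] be continuous with F(ρ)→0 as ρ→∞, and let h̃ be a twice differentiable solution on (0,∞) of ρ²h̃''+2ρh̃'=2F²h̃+(β²/2)h̃(h̃²−1)ρ² with h̃(0)=0 and h̃(ρ)>0 for ρ>0. If h̃ is bounded on [0,∞) and the function ρ↦ρh̃(ρ) has nonnegative derivative for all ρ>0, then lim_{ρ→∞} h̃(ρ) = 1. -/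
open Real Set Filter Topology

/-!
With `H ρ = ρ * h̃ ρ` the equation reads `H'' = 2F²h̃/ρ + (β²/2) H (h̃² - 1)`, and `H` is
nondecreasing with `0 ≤ H ρ ≤ M ρ`. If `h̃ ρ ≥ 1 + δ` at a large `ρ`, monotonicity of `H` keeps
`h̃ ≥ 1 + δ/3` on `[ρ, (1 + δ/3) ρ]`, where then `H'' ≳ ρ`; integrating twice forward from `ρ`,
where `H' ≥ 0`, makes `H` grow by `≳ ρ³`, against `H ≤ M ρ`. If `h̃ ρ ≤ 1 - δ` at a large `ρ`,
then `h̃ ≤ 1 - 2δ/3` on `[(1 - δ/3) ρ, ρ]`, where `H'' ≤ -c < 0` since `H ≥ H 1 > 0`;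
integrating twice backward from `ρ`, where `H' ≥ 0`, makes `H` grow by `≳ ρ²`, again against
`H ≤ M ρ`.
-/

theorem sub_le_sub_of_hasDerivAt_le {f g f' g' : ℝ → ℝ} {a b : ℝ} (hab : a ≤ b)
    (hf : ∀ x ∈ Icc a b, HasDerivAt f (f' x) x) (hg : ∀ x ∈ Icc a b, HasDerivAt g (g' x) x)
    (hle : ∀ x ∈ Ioo a b, f' x ≤ g' x) : f b - f a ≤ g b - g a := by
  have hmono : MonotoneOn (fun x => g x - f x) (Icc a b) := by
    refine monotoneOn_of_hasDerivWithinAt_nonneg (convex_Icc a b) (f' := fun x => g' x - f' x)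
      (fun x hx => ((hg x hx).sub (hf x hx)).continuousAt.continuousWithinAt) ?_ ?_ <;>
      rw [interior_Icc]
    · exact fun x hx =>
        ((hg x (Ioo_subset_Icc_self hx)).sub (hf x (Ioo_subset_Icc_self hx))).hasDerivWithinAt
    · exact fun x hx => sub_nonneg.2 (hle x hx)
  linarith [hmono (left_mem_Icc.2 hab) (right_mem_Icc.2 hab) hab]

theorem quadratic_le_sub_of_le_deriv_deriv {f : ℝ → ℝ} {a b κ : ℝ} (hab : a ≤ b)
    (hf : ∀ x ∈ Icc a b, DifferentiableAt ℝ f x ∧ DifferentiableAt ℝ (deriv f) x)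
    (ha : 0 ≤ deriv f a) (hκ : ∀ x ∈ Ioo a b, κ ≤ deriv (deriv f) x) :
    κ / 2 * (b - a) ^ 2 ≤ f b - f a := by
  have hf' : ∀ x ∈ Icc a b, κ * (x - a) ≤ deriv f x := by
    intro x hx
    have := sub_le_sub_of_hasDerivAt_le hx.1 (f := fun y => κ * y) (g := deriv f)
      (fun y _ => by simpa using (hasDerivAt_id' y).const_mul κ)
      (fun y hy => (hf y ⟨hy.1, hy.2.trans hx.2⟩).2.hasDerivAt)
      (fun y hy => hκ y ⟨hy.1, hy.2.trans_le hx.2⟩)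
    linarith
  have := sub_le_sub_of_hasDerivAt_le hab (f := fun x => κ / 2 * (x - a) ^ 2) (g := f)
    (fun x _ => ((((hasDerivAt_id' x).sub_const a).pow 2).const_mul (κ / 2)).congr_deriv
      (by norm_num; ring))
    (fun x hx => (hf x hx).1.hasDerivAt) (fun x hx => hf' x (Ioo_subset_Icc_self hx))
  simpa using this

theorem quadratic_le_sub_of_deriv_deriv_le_neg {f : ℝ → ℝ} {a b κ : ℝ} (hab : a ≤ b)
    (hf : ∀ x ∈ Icc a b, DifferentiableAt ℝ f x ∧ DifferentiableAt ℝ (deriv f) x)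
    (hb : 0 ≤ deriv f b) (hκ : ∀ x ∈ Ioo a b, deriv (deriv f) x ≤ -κ) :
    κ / 2 * (b - a) ^ 2 ≤ f b - f a := by
  have hf' : ∀ x ∈ Icc a b, κ * (b - x) ≤ deriv f x := by
    intro x hx
    have := sub_le_sub_of_hasDerivAt_le hx.2 (f := deriv f) (g := fun y => -κ * y)
      (fun y hy => (hf y ⟨hx.1.trans hy.1, hy.2⟩).2.hasDerivAt)
      (fun y _ => by simpa using (hasDerivAt_id' y).const_mul (-κ))
      (fun y hy => hκ y ⟨hx.1.trans_lt hy.1, hy.2⟩)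
    linarith
  have := sub_le_sub_of_hasDerivAt_le hab (f := fun x => -(κ / 2 * (b - x) ^ 2)) (g := f)
    (fun x _ => ((((hasDerivAt_id' x).const_sub b).pow 2).const_mul (κ / 2)).neg.congr_deriv
      (by norm_num; ring))
    (fun x hx => (hf x hx).1.hasDerivAt) (fun x hx => hf' x (Ioo_subset_Icc_self hx))
  simpa using this

theorem monotoneOn_Ioi_of_deriv_nonneg {f : ℝ → ℝ} {c : ℝ}
    (hf : ∀ x ∈ Ioi c, DifferentiableAt ℝ f x) (hf' : ∀ x ∈ Ioi c, 0 ≤ deriv f x) :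
    MonotoneOn f (Ioi c) :=
  monotoneOn_of_deriv_nonneg (convex_Ioi c)
    (fun x hx => (hf x hx).continuousAt.continuousWithinAt)
    (fun x hx => (hf x (interior_subset hx)).differentiableWithinAt)
    (fun x hx => hf' x (interior_subset hx))

section IdMul

variable {h : ℝ → ℝ}

theorem hasDerivAt_id_mul {x : ℝ} (hx : DifferentiableAt ℝ h x) :
    HasDerivAt (fun y => y * h y) (h x + x * deriv h x) x :=
  ((hasDerivAt_id' x).mul hx.hasDerivAt).congr_deriv (by ring)

theorem hasDerivAt_deriv_id_mul {x : ℝ} (hd : ∀ᶠ y in 𝓝 x, DifferentiableAt ℝ h y)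
    (hd' : DifferentiableAt ℝ (deriv h) x) :
    HasDerivAt (deriv fun y => y * h y) (2 * deriv h x + x * deriv (deriv h) x) x := by
  have heq : deriv (fun y => y * h y) =ᶠ[𝓝 x] fun y => h y + y * deriv h y :=
    hd.mono fun y hy => (hasDerivAt_id_mul hy).deriv
  refine HasDerivAt.congr_of_eventuallyEq ?_ heq
  exact (hd.self_of_nhds.hasDerivAt.add (hasDerivAt_id_mul hd')).congr_deriv (by ring)

theorem hasDerivAt_deriv_id_mul_of_ode {β : ℝ} {F : ℝ → ℝ}
    (hdiff : ∀ ρ ∈ Ioi (0:ℝ), DifferentiableAt ℝ h ρ ∧ DifferentiableAt ℝ (deriv h) ρ)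
    (hode : ∀ ρ ∈ Ioi (0:ℝ), ρ ^ 2 * deriv (deriv h) ρ + 2 * ρ * deriv h ρ
      = 2 * F ρ ^ 2 * h ρ + (β ^ 2 / 2) * h ρ * (h ρ ^ 2 - 1) * ρ ^ 2)
    {x : ℝ} (hx : x ∈ Ioi 0) :
    HasDerivAt (deriv fun y => y * h y)
      (2 * F x ^ 2 * h x / x + β ^ 2 / 2 * (x * h x) * (h x ^ 2 - 1)) x := by
  have hd : ∀ᶠ y in 𝓝 x, DifferentiableAt ℝ h y :=
    (eventually_gt_nhds hx).mono fun y hy => (hdiff y hy).1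
  convert hasDerivAt_deriv_id_mul hd (hdiff x hx).2 using 1
  have hx0 : x ≠ 0 := ne_of_gt hx
  field_simp
  linear_combination -2 * hode x hx

theorem deriv_deriv_id_mul_bounds_of_ode {β M : ℝ} {F : ℝ → ℝ}
    (hFrange : ∀ ρ ∈ Ici (0:ℝ), 0 ≤ F ρ ∧ F ρ ≤ 1)
    (hdiff : ∀ ρ ∈ Ioi (0:ℝ), DifferentiableAt ℝ h ρ ∧ DifferentiableAt ℝ (deriv h) ρ)
    (hode : ∀ ρ ∈ Ioi (0:ℝ), ρ ^ 2 * deriv (deriv h) ρ + 2 * ρ * deriv h ρ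
      = 2 * F ρ ^ 2 * h ρ + (β ^ 2 / 2) * h ρ * (h ρ ^ 2 - 1) * ρ ^ 2)
    (hpos : ∀ ρ ∈ Ioi (0:ℝ), 0 < h ρ) (hM : ∀ ρ ∈ Ioi (0:ℝ), h ρ ≤ M)
    {x : ℝ} (hx : x ∈ Ioi 0) :
    β ^ 2 / 2 * (x * h x) * (h x ^ 2 - 1) ≤ deriv (deriv fun y => y * h y) x ∧
      deriv (deriv fun y => y * h y) x ≤ 2 * M / x + β ^ 2 / 2 * (x * h x) * (h x ^ 2 - 1) := by
  have hx0 : 0 < x := hx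
  have hF := hFrange x (Ioi_subset_Ici_self hx)
  have hFh : F x ^ 2 * h x ≤ M :=
    (mul_le_of_le_one_left (hpos x hx).le (pow_le_one₀ hF.1 hF.2)).trans (hM x hx)
  have hFterm_nonneg : 0 ≤ 2 * F x ^ 2 * h x / x :=
    div_nonneg (mul_nonneg (by positivity) (hpos x hx).le) hx0.le
  have hFterm_le : 2 * F x ^ 2 * h x / x ≤ 2 * M / x :=
    div_le_div_of_nonneg_right (by linarith) hx0.le
  rw [(hasDerivAt_deriv_id_mul_of_ode hdiff hode hx).deriv]
  constructor <;> linarith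

end IdMul

theorem eventually_lt_one_add {h : ℝ → ℝ} {β M δ : ℝ} (hβ : 0 < β) (hδ : 0 < δ) (hδ1 : δ ≤ 1)
    (hd : ∀ x ∈ Ioi (0:ℝ), DifferentiableAt ℝ (fun y => y * h y) x ∧
      DifferentiableAt ℝ (deriv fun y => y * h y) x)
    (hmono : ∀ x ∈ Ioi (0:ℝ), 0 ≤ deriv (fun y => y * h y) x)
    (hM : ∀ x ∈ Ioi (0:ℝ), h x ≤ M)
    (hconvex : ∀ x ∈ Ioi (0:ℝ),
      β ^ 2 / 2 * (x * h x) * (h x ^ 2 - 1) ≤ deriv (deriv fun y => y * h y) x) :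
    ∀ᶠ ρ in atTop, h ρ < 1 + δ := by
  have hH := monotoneOn_Ioi_of_deriv_nonneg (fun x hx => (hd x hx).1) hmono
  -- the contradiction below is `β²δ³ρ³/54 ≤ H b - H ρ ≤ 2Mρ`
  have hlarge : ∀ᶠ ρ in atTop, 108 * M < β ^ 2 * δ ^ 3 * ρ ^ 2 :=
    ((tendsto_pow_atTop two_ne_zero).const_mul_atTop (by positivity)).eventually_gt_atTop _
  filter_upwards [eventually_gt_atTop 0, hlarge] with ρ (hρ : 0 < ρ) hρlarge
  by_contra! hρh
  set b := ρ * (1 + δ / 3) with hb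
  have hρb : ρ ≤ b := by nlinarith
  have hHρ : ∀ x ∈ Icc ρ b, ρ * (1 + δ) ≤ x * h x := fun x hx =>
    (mul_le_mul_of_nonneg_left hρh hρ.le).trans (hH hρ (hρ.trans_le hx.1) hx.1)
  have hκ : ∀ x ∈ Ioo ρ b, β ^ 2 * ρ * δ / 3 ≤ deriv (deriv fun y => y * h y) x := by
    intro x hx
    have hx0 : 0 < x := hρ.trans hx.1
    have hxH := hHρ x (Ioo_subset_Icc_self hx)
    have hhx : 1 + δ / 3 ≤ h x := by nlinarith [hx.2]
    have hprod : ρ * (2 * δ / 3) ≤ x * h x * (h x ^ 2 - 1) :=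
      mul_le_mul (by nlinarith) (by nlinarith) (by positivity) (by nlinarith)
    calc β ^ 2 * ρ * δ / 3 = β ^ 2 / 2 * (ρ * (2 * δ / 3)) := by ring
      _ ≤ β ^ 2 / 2 * (x * h x * (h x ^ 2 - 1)) := by gcongr
      _ ≤ _ := by rw [← mul_assoc]; exact hconvex x hx0
  have hgrowth := quadratic_le_sub_of_le_deriv_deriv hρb
    (fun x hx => hd x (hρ.trans_le hx.1)) (hmono ρ hρ) hκ
  have hb0 : 0 < b := hρ.trans_le hρb
  have hHb : b * h b ≤ b * M := mul_le_mul_of_nonneg_left (hM b hb0) hb0.le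
  have hM0 : 0 ≤ M := by nlinarith [hHρ b (right_mem_Icc.2 hρb)]
  have hbρ : b - ρ = ρ * δ / 3 := by rw [hb]; ring
  rw [hbρ] at hgrowth
  have hbM : b * M ≤ 2 * ρ * M := mul_le_mul_of_nonneg_right (by nlinarith) hM0
  nlinarith [mul_lt_mul_of_pos_right hρlarge hρ]

theorem eventually_one_sub_lt {h : ℝ → ℝ} {β C M δ : ℝ} (hβ : 0 < β) (hδ : 0 < δ) (hδ1 : δ ≤ 1)
    (hd : ∀ x ∈ Ioi (0:ℝ), DifferentiableAt ℝ (fun y => y * h y) x ∧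
      DifferentiableAt ℝ (deriv fun y => y * h y) x)
    (hmono : ∀ x ∈ Ioi (0:ℝ), 0 ≤ deriv (fun y => y * h y) x)
    (hpos : ∀ x ∈ Ioi (0:ℝ), 0 < h x) (hM : ∀ x ∈ Ioi (0:ℝ), h x ≤ M)
    (hconcave : ∀ x ∈ Ioi (0:ℝ),
      deriv (deriv fun y => y * h y) x ≤ C / x + β ^ 2 / 2 * (x * h x) * (h x ^ 2 - 1)) :
    ∀ᶠ ρ in atTop, 1 - δ < h ρ := by
  have hH := monotoneOn_Ioi_of_deriv_nonneg (fun x hx => (hd x hx).1) hmono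
  have hc₀ : 0 < h 1 := hpos 1 (mem_Ioi.2 one_pos)
  set κ := β ^ 2 * h 1 * δ / 6 with hκ_def
  have hκ0 : 0 < κ := by positivity
  have hCρ : ∀ᶠ ρ in atTop, 3 * C < 2 * κ * ρ :=
    (tendsto_id.const_mul_atTop (by positivity)).eventually_gt_atTop _
  -- the contradiction below is `β² h(1) δ³ρ²/108 ≤ H ρ - H a ≤ Mρ`
  have hlarge : ∀ᶠ ρ in atTop, 108 * M < β ^ 2 * h 1 * δ ^ 3 * ρ :=
    (tendsto_id.const_mul_atTop (by positivity)).eventually_gt_atTop _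
  filter_upwards [eventually_ge_atTop (3 / 2), hCρ, hlarge] with ρ hρ hρC hρlarge
  by_contra! hρh
  have hρ0 : 0 < ρ := by linarith
  set a := ρ * (1 - δ / 3) with ha
  have ha23 : 2 * ρ / 3 ≤ a := by nlinarith
  have ha1 : 1 ≤ a := by linarith
  have haρ : a ≤ ρ := by nlinarith
  have hHρ : ∀ x ∈ Icc a ρ, x * h x ≤ ρ * (1 - δ) := fun x hx =>
    (hH (zero_lt_one.trans_le (ha1.trans hx.1)) hρ0 hx.2).trans
      (mul_le_mul_of_nonneg_left hρh hρ0.le)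
  have hH1 : ∀ x ∈ Icc a ρ, h 1 ≤ x * h x := fun x hx => by
    simpa using hH (mem_Ioi.2 one_pos) (zero_lt_one.trans_le (ha1.trans hx.1)) (ha1.trans hx.1)
  have hκ : ∀ x ∈ Ioo a ρ, deriv (deriv fun y => y * h y) x ≤ -κ := by
    intro x hx
    have hx0 : 0 < x := by linarith [hx.1]
    have hhx0 := hpos x hx0
    have hxH := hHρ x (Ioo_subset_Icc_self hx)
    have hhx : h x ≤ 1 - 2 * δ / 3 := by
      by_contra! hcon
      nlinarith [mul_lt_mul_of_pos_right hcon (by nlinarith : 0 < ρ * (1 - δ / 3)), hx.1]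
    have hsq : h x ^ 2 - 1 ≤ -(2 * δ / 3) := by nlinarith
    have hmain : x * h x * (h x ^ 2 - 1) ≤ h 1 * -(2 * δ / 3) :=
      calc x * h x * (h x ^ 2 - 1) ≤ h 1 * (h x ^ 2 - 1) :=
            mul_le_mul_of_nonpos_right (hH1 x (Ioo_subset_Icc_self hx)) (by linarith)
        _ ≤ h 1 * -(2 * δ / 3) := mul_le_mul_of_nonneg_left hsq hc₀.le
    have hCx : C / x ≤ κ := by
      have hx : 2 * ρ / 3 ≤ x := by linarith [hx.1]
      rw [div_le_iff₀ hx0]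
      nlinarith [mul_le_mul_of_nonneg_left hx hκ0.le]
    calc deriv (deriv fun y => y * h y) x
        ≤ C / x + β ^ 2 / 2 * (x * h x * (h x ^ 2 - 1)) := by
          rw [← mul_assoc]; exact hconcave x hx0
      _ ≤ κ + β ^ 2 / 2 * (h 1 * -(2 * δ / 3)) := by gcongr
      _ = -κ := by rw [hκ_def]; ring
  have hgrowth := quadratic_le_sub_of_deriv_deriv_le_neg haρ
    (fun x hx => hd x (zero_lt_one.trans_le (ha1.trans hx.1))) (hmono ρ hρ0) hκ
  have hρa : ρ - a = ρ * δ / 3 := by rw [ha]; ring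
  rw [hρa, hκ_def] at hgrowth
  have ha0 : 0 ≤ a * h a := mul_nonneg (by linarith) (hpos a (mem_Ioi.2 (by linarith))).le
  have hρM : ρ * h ρ ≤ ρ * M := mul_le_mul_of_nonneg_left (hM ρ hρ0) hρ0.le
  nlinarith [mul_lt_mul_of_pos_right hρlarge hρ0]

theorem h_limit_one_general (β : ℝ) (hβ : 0 < β) (F htil : ℝ → ℝ)
    (hFrange : ∀ ρ ∈ Ici (0:ℝ), 0 ≤ F ρ ∧ F ρ ≤ 1)
    (hdiff : ∀ ρ ∈ Ioi (0:ℝ), DifferentiableAt ℝ htil ρ ∧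
      DifferentiableAt ℝ (deriv htil) ρ)
    (hode : ∀ ρ ∈ Ioi (0:ℝ), ρ ^ 2 * deriv (deriv htil) ρ + 2 * ρ * deriv htil ρ
      = 2 * F ρ ^ 2 * htil ρ + (β ^ 2 / 2) * htil ρ * (htil ρ ^ 2 - 1) * ρ ^ 2)
    (hpos : ∀ ρ ∈ Ioi (0:ℝ), 0 < htil ρ)
    (hbdd : ∃ M : ℝ, ∀ ρ ∈ Ici (0:ℝ), |htil ρ| ≤ M)
    (hH' : ∀ ρ ∈ Ioi (0:ℝ), 0 ≤ deriv (fun x => x * htil x) ρ) :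
    Tendsto htil atTop (𝓝 1) := by
  obtain ⟨M, hM⟩ := hbdd
  have hle : ∀ x ∈ Ioi (0:ℝ), htil x ≤ M := fun x hx =>
    (le_abs_self _).trans (hM x (Ioi_subset_Ici_self hx))
  have hd : ∀ x ∈ Ioi (0:ℝ), DifferentiableAt ℝ (fun y => y * htil y) x ∧
      DifferentiableAt ℝ (deriv fun y => y * htil y) x := fun x hx =>
    ⟨(hasDerivAt_id_mul (hdiff x hx).1).differentiableAt,
      (hasDerivAt_deriv_id_mul_of_ode hdiff hode hx).differentiableAt⟩
  have hbounds := fun x (hx : x ∈ Ioi (0:ℝ)) =>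
    deriv_deriv_id_mul_bounds_of_ode hFrange hdiff hode hpos hle hx
  rw [tendsto_order]
  refine ⟨fun a ha => ?_, fun a ha => ?_⟩
  · filter_upwards [eventually_one_sub_lt hβ (lt_min (sub_pos.2 ha) one_pos) (min_le_right _ _)
      hd hH' hpos hle fun x hx => (hbounds x hx).2] with ρ hρ
    linarith [min_le_left (1 - a) 1]
  · filter_upwards [eventually_lt_one_add hβ (lt_min (sub_pos.2 ha) one_pos) (min_le_right _ _)
      hd hH' hle fun x hx => (hbounds x hx).1] with ρ hρ
    linarith [min_le_left (a - 1) 1]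

/-- A bounded positive solution `h̃` of the `h`-equation with `(ρh̃(ρ))' ≥ 0` tends to `1`
at infinity. -/
theorem h_limit_one (β : ℝ) (hβ : 0 < β) (F htil : ℝ → ℝ)
    (hFcont : ContinuousOn F (Ici 0))
    (hFrange : ∀ ρ ∈ Ici (0:ℝ), 0 ≤ F ρ ∧ F ρ ≤ 1)
    (hFlim : Tendsto F atTop (𝓝 0))
    (hdiff : ∀ ρ ∈ Ioi (0:ℝ), DifferentiableAt ℝ htil ρ ∧
      DifferentiableAt ℝ (deriv htil) ρ)
    (hode : ∀ ρ ∈ Ioi (0:ℝ), ρ ^ 2 * deriv (deriv htil) ρ + 2 * ρ * deriv htil ρ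
      = 2 * F ρ ^ 2 * htil ρ + (β ^ 2 / 2) * htil ρ * (htil ρ ^ 2 - 1) * ρ ^ 2)
    (h0 : htil 0 = 0)
    (hpos : ∀ ρ ∈ Ioi (0:ℝ), 0 < htil ρ)
    (hbdd : ∃ M : ℝ, ∀ ρ ∈ Ici (0:ℝ), |htil ρ| ≤ M)
    (hH' : ∀ ρ ∈ Ioi (0:ℝ), 0 ≤ deriv (fun x => x * htil x) ρ) :
    Tendsto htil atTop (𝓝 1) :=
  h_limit_one_general β hβ F htil hFrange hdiff hode hpos hbdd hH'
end
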